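/- arXiv:1903.06820 — 11 statements merged into one kernel-verified Lean document; each statement's English description precedes it below -/
import Mathlib

section
/- Let P, Q be integers, Δ = P² - 4Q, and let U be the Lucas sequence defined by U₀ = 0, U₁ = 1, Uₙ = P·Uₙ₋₁ - Q·Uₙ₋₂. If p is a prime not dividing 2QΔ, then U_{p - (Δ/p)} ≡ 0 (mod p), where (Δ/p) is the Legendre symbol. -/
/-- The Lucas sequence `U n (P, Q)`: `U₀ = 0`, `U₁ = 1`, `Uₙ = P·Uₙ₋₁ - Q·Uₙ₋₂`. -/
def lucasU (P Q : ℤ) : ℕ → ℤ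
  | 0 => 0
  | 1 => 1
  | n + 2 => P * lucasU P Q (n + 1) - Q * lucasU P Q n

lemma lucasU_formula (P Q : ℤ) {R : Type*} [CommRing R] (s : R)
    (hs : s ^ 2 = (P : R) ^ 2 - 4 * Q) (n : ℕ) :
    ((P : R) + s) ^ n - ((P : R) - s) ^ n = 2 ^ n * (lucasU P Q n : R) * s := by
  induction n using Nat.twoStepInduction with
  | zero => simp [lucasU]
  | one => simp [lucasU]; ring
  | more k ih1 ih2 =>
    have hA : ((P : R) + s) ^ (k + 2)
        = 2 * P * ((P : R) + s) ^ (k + 1) - 4 * Q * ((P : R) + s) ^ k := by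
      have h2 : ((P : R) + s) ^ 2 = 2 * P * ((P : R) + s) - 4 * Q := by
        linear_combination hs
      calc ((P : R) + s) ^ (k + 2) = ((P : R) + s) ^ 2 * ((P : R) + s) ^ k := by ring
        _ = _ := by rw [h2]; ring
    have hB : ((P : R) - s) ^ (k + 2)
        = 2 * P * ((P : R) - s) ^ (k + 1) - 4 * Q * ((P : R) - s) ^ k := by
      have h2 : ((P : R) - s) ^ 2 = 2 * P * ((P : R) - s) - 4 * Q := by
        linear_combination hs
      calc ((P : R) - s) ^ (k + 2) = ((P : R) - s) ^ 2 * ((P : R) - s) ^ k := by ring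
        _ = _ := by rw [h2]; ring
    rw [hA, hB]
    have hrec : (lucasU P Q (k + 2) : R) = P * lucasU P Q (k + 1) - Q * lucasU P Q k := by
      simp [lucasU]
    rw [hrec]
    linear_combination (2 * (P : R)) * ih2 - (4 * (Q : R)) * ih1

theorem stmt_0 (P Q : ℤ) (Δ : ℤ) (hΔ : Δ = P ^ 2 - 4 * Q) (p : ℕ) [Fact p.Prime]
    (hp : ¬ (p : ℤ) ∣ 2 * Q * Δ) :
    (p : ℤ) ∣ lucasU P Q ((p : ℤ) - legendreSym p Δ).toNat := by
  have hprime : p.Prime := Fact.out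
  have hp2 : ¬ (p : ℤ) ∣ 2 := fun h => hp ((h.mul_right Q).mul_right Δ)
  have hpQ : ¬ (p : ℤ) ∣ Q := fun h => hp ((h.mul_left 2).mul_right Δ)
  have hpΔ : ¬ (p : ℤ) ∣ Δ := fun h => hp (h.mul_left (2 * Q))
  -- the quadratic extension
  set f : Polynomial (ZMod p) := Polynomial.X ^ 2 - Polynomial.C ((Δ : ZMod p)) with hf
  have hfmonic : f.Monic := by
    apply Polynomial.monic_X_pow_sub_C _ (by norm_num)
  have hfdeg : f.degree = 2 := by
    rw [hf]; compute_degree!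
  haveI : Nontrivial (AdjoinRoot f) := AdjoinRoot.nontrivial f (by rw [hfdeg]; norm_num)
  set R := AdjoinRoot f with hR
  have hinj : Function.Injective (algebraMap (ZMod p) R) := RingHom.injective _
  haveI : CharP R p := charP_of_injective_algebraMap hinj p
  set s : R := AdjoinRoot.root f with hsdef
  have hs2 : s ^ 2 = ((Δ : ℤ) : R) := by
    have h0 : f.eval₂ (algebraMap (ZMod p) R) s = 0 := AdjoinRoot.eval₂_root f
    simp only [hf, Polynomial.eval₂_sub, Polynomial.eval₂_X_pow, Polynomial.eval₂_C] at h0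
    rw [sub_eq_zero] at h0
    rw [h0, ← map_intCast (algebraMap (ZMod p) R) Δ]
  have hs : s ^ 2 = (P : R) ^ 2 - 4 * Q := by
    rw [hs2, hΔ]; push_cast; ring_nf
    have e1 : ((Q*4:ℤ):R) = (Q:R)*4 := by exact Int.cast_mul Q 4 |>.trans (by norm_num)
    linear_combination -e1
  -- p is odd
  have hp_ne_two : p ≠ 2 := by rintro rfl; exact hp2 (by norm_num)
  have hΔne : ((Δ : ℤ) : ZMod p) ≠ 0 := by
    rw [Ne, ZMod.intCast_zmod_eq_zero_iff_dvd]; exact hpΔ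
  have hu2 : IsUnit (2 : R) := by
    have h1 : ((2:ℤ) : ZMod p) ≠ 0 := by
      rw [Ne, ZMod.intCast_zmod_eq_zero_iff_dvd]; exact hp2
    have h2 := (isUnit_iff_ne_zero.mpr h1).map (algebraMap (ZMod p) R)
    rwa [map_intCast, Int.cast_two] at h2
  have huΔ : IsUnit ((Δ:ℤ) : R) := by
    have h2 := (isUnit_iff_ne_zero.mpr hΔne).map (algebraMap (ZMod p) R)
    rwa [map_intCast] at h2
  have hPp : (P : R) ^ p = (P : R) := by
    rw [← map_intCast (algebraMap (ZMod p) R) P, ← map_pow, ZMod.pow_card]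
  have hsp : s ^ p = ((legendreSym p Δ : ℤ) : R) * s := by
    obtain ⟨k, hk⟩ := hprime.odd_of_ne_two hp_ne_two
    have hpow : s ^ p = (s ^ 2) ^ (p / 2) * s := by
      rw [← pow_mul, ← pow_succ]; congr 1; omega
    rw [hpow, hs2]
    have hleg : ((legendreSym p Δ : ℤ) : ZMod p) = (Δ : ZMod p) ^ (p / 2) :=
      legendreSym.eq_pow p Δ
    calc ((Δ:ℤ):R) ^ (p/2) * s
        = algebraMap (ZMod p) R (((Δ:ℤ) : ZMod p) ^ (p/2)) * s := by
          rw [map_pow, map_intCast]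
      _ = algebraMap (ZMod p) R ((legendreSym p Δ : ℤ) : ZMod p) * s := by rw [← hleg]
      _ = ((legendreSym p Δ : ℤ) : R) * s := by rw [map_intCast]
  suffices h : ∀ n : ℕ, ((P:R)+s) ^ n = ((P:R)-s) ^ n → (p:ℤ) ∣ lucasU P Q n by
    rcases legendreSym.eq_one_or_neg_one p hΔne with hε | hε
    · have hn : ((p:ℤ) - legendreSym p Δ).toNat = p - 1 := by
        rw [hε]; omega
      rw [hn]
      apply h
      have hABmul : ((P:R)+s) * ((P:R)-s) = ((4*Q : ℤ) : R) := by
        push_cast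
        have e1 : ((4*Q:ℤ):R) = 4*(Q:R) := by erw [Int.cast_mul]; norm_num
        linear_combination -hs - e1
      have hu4Q : IsUnit ((4*Q:ℤ) : R) := by
        have h1 : ((4*Q:ℤ) : ZMod p) ≠ 0 := by
          rw [Ne, ZMod.intCast_zmod_eq_zero_iff_dvd]
          intro hdvd
          have hpr : Prime ((p:ℤ)) := Nat.prime_iff_prime_int.mp hprime
          have h4 : (4:ℤ) = 2 * 2 := by norm_num
          rcases hpr.dvd_mul.mp hdvd with h' | h'
          · rw [h4] at h'
            rcases hpr.dvd_mul.mp h' with h'' | h'' <;> exact hp2 h''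
          · exact hpQ h'
        have h2 := (isUnit_iff_ne_zero.mpr h1).map (algebraMap (ZMod p) R)
        rwa [map_intCast] at h2
      have huA : IsUnit ((P:R)+s) := isUnit_of_mul_isUnit_left (hABmul ▸ hu4Q)
      have huB : IsUnit ((P:R)-s) := isUnit_of_mul_isUnit_right (hABmul ▸ hu4Q)
      have hAp : ((P:R)+s) ^ p = (P:R)+s := by
        rw [add_pow_char, hPp, hsp, hε]; push_cast; ring
      have hBp : ((P:R)-s) ^ p = (P:R)-s := by
        rw [sub_pow_char, hPp, hsp, hε]; push_cast; ring
      have hA1 : ((P:R)+s) ^ (p-1) = 1 := by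
        apply huA.mul_right_cancel
        rw [one_mul, ← pow_succ, show p - 1 + 1 = p from by have := hprime.pos; omega]
        exact hAp
      have hB1 : ((P:R)-s) ^ (p-1) = 1 := by
        apply huB.mul_right_cancel
        rw [one_mul, ← pow_succ, show p - 1 + 1 = p from by have := hprime.pos; omega]
        exact hBp
      rw [hA1, hB1]
    · have hn : ((p:ℤ) - legendreSym p Δ).toNat = p + 1 := by
        rw [hε]; omega
      rw [hn]
      apply h
      have hAp : ((P:R)+s) ^ p = (P:R)-s := by
        rw [add_pow_char, hPp, hsp, hε]; push_cast; ring
      have hBp : ((P:R)-s) ^ p = (P:R)+s := by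
        rw [sub_pow_char, hPp, hsp, hε]; push_cast; ring
      rw [pow_succ, pow_succ, hAp, hBp]; ring
  intro n hne
  have hform := lucasU_formula P Q s hs n
  have h1 : (2:R)^n * (lucasU P Q n : R) * s = 0 := by
    rw [← hform, hne, sub_self]
  have h2 : (lucasU P Q n : R) * ((2:R)^n * ((Δ:ℤ):R)) = 0 := by
    linear_combination s * h1 - (2:R)^n * (lucasU P Q n : R) * hs2
  have h3 : (lucasU P Q n : R) = 0 :=
    (((hu2.pow n).mul huΔ).mul_left_eq_zero).mp h2
  have h4 : ((lucasU P Q n : ℤ) : ZMod p) = 0 := by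
    apply hinj
    rw [map_intCast, h3, map_zero]
  rwa [ZMod.intCast_zmod_eq_zero_iff_dvd] at h4
end

section
/- Let P, Q be integers, Δ = P² - 4Q, U_n = U_n(P,Q) the Lucas sequence and V_n = V_n(P,Q) the companion sequence. Let p be a prime not dividing 2QΔ, and write p - (Δ/p) = 2^r·s with s odd. Then either U_s ≡ 0 (mod p), or V_{2^t·s} ≡ 0 (mod p) for some t with 0 ≤ t < r. -/
/-- The companion Lucas sequence `V n (P, Q)`: `V₀ = 2`, `V₁ = P`, `Vₙ = P·Vₙ₋₁ - Q·Vₙ₋₂`. -/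
def lucasV (P Q : ℤ) : ℕ → ℤ
  | 0 => 2
  | 1 => P
  | n + 2 => P * lucasV P Q (n + 1) - Q * lucasV P Q n

private lemma lucasU_two (P Q : ℤ) (n : ℕ) :
    lucasU P Q (n + 2) = P * lucasU P Q (n + 1) - Q * lucasU P Q n := rfl

private lemma lucasV_two (P Q : ℤ) (n : ℕ) :
    lucasV P Q (n + 2) = P * lucasV P Q (n + 1) - Q * lucasV P Q n := rfl

/-- Binet-style formulas in any field containing roots α β of x² - Px + Q. -/
private lemma lucas_formulas {K : Type*} [Field K] (P Q : ℤ) (α β : K)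
    (hs : α + β = (P : K)) (hq : α * β = (Q : K)) (n : ℕ) :
    (lucasU P Q n : K) * (α - β) = α ^ n - β ^ n ∧ (lucasV P Q n : K) = α ^ n + β ^ n := by
  induction n using Nat.twoStepInduction with
  | zero => refine ⟨by simp [lucasU], by simp [lucasV]; norm_num⟩
  | one => refine ⟨by simp [lucasU], by simp [lucasV, hs]⟩
  | more n ih1 ih2 =>
    obtain ⟨hU1, hV1⟩ := ih1
    obtain ⟨hU2, hV2⟩ := ih2
    constructor
    · rw [lucasU_two]
      push_cast
      linear_combination (P : K) * hU2 - (Q : K) * hU1 -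
        (α ^ (n + 1) - β ^ (n + 1)) * hs + (α ^ n - β ^ n) * hq
    · rw [lucasV_two]
      push_cast
      linear_combination (P : K) * hV2 - (Q : K) * hV1 -
        (α ^ (n + 1) + β ^ (n + 1)) * hs + (α ^ n + β ^ n) * hq

private lemma lucasV_eq_U (P Q : ℤ) (n : ℕ) :
    lucasV P Q n = 2 * lucasU P Q (n + 1) - P * lucasU P Q n := by
  induction n using Nat.twoStepInduction with
  | zero => simp [lucasU, lucasV]
  | one => simp [lucasU, lucasV]; ring
  | more n ih1 ih2 =>
    rw [lucasV_two, lucasU_two P Q (n + 1), ih1, ih2, lucasU_two]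
    ring

private lemma lucas_QU (P Q : ℤ) (n : ℕ) :
    2 * Q * lucasU P Q n = P * lucasU P Q (n + 1) - lucasV P Q (n + 1) := by
  rw [lucasV_eq_U P Q (n + 1), lucasU_two]
  ring

private lemma lucas_descent (P Q : ℤ) (p : ℕ)
    (h2 : ∀ n, (p : ℤ) ∣ lucasU P Q (2 * n) → (p : ℤ) ∣ lucasU P Q n ∨ (p : ℤ) ∣ lucasV P Q n) :
    ∀ r s : ℕ, (p : ℤ) ∣ lucasU P Q (2 ^ r * s) →
      (p : ℤ) ∣ lucasU P Q s ∨ ∃ t < r, (p : ℤ) ∣ lucasV P Q (2 ^ t * s) := by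
  intro r
  induction r with
  | zero => intro s h; left; simpa using h
  | succ r ih =>
    intro s h
    have h' : (p : ℤ) ∣ lucasU P Q (2 * (2 ^ r * s)) := by
      rw [show 2 * (2 ^ r * s) = 2 ^ (r + 1) * s by ring]; exact h
    rcases h2 _ h' with h1 | h1
    · rcases ih s h1 with h3 | ⟨t, ht, h4⟩
      · exact Or.inl h3
      · exact Or.inr ⟨t, ht.trans (Nat.lt_succ_self r), h4⟩
    · exact Or.inr ⟨r, Nat.lt_succ_self r, h1⟩

theorem stmt_1 (P Q : ℤ) (Δ : ℤ) (hΔ : Δ = P ^ 2 - 4 * Q) (p : ℕ) [Fact p.Prime]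
    (hp : ¬ (p : ℤ) ∣ 2 * Q * Δ) (r s : ℕ) (hs : Odd s)
    (hrs : (p : ℤ) - legendreSym p Δ = 2 ^ r * s) :
    (p : ℤ) ∣ lucasU P Q s ∨ ∃ t < r, (p : ℤ) ∣ lucasV P Q (2 ^ t * s) := by
  have hpp : p.Prime := Fact.out
  have hprime : Prime (p : ℤ) := Nat.prime_iff_prime_int.mp hpp
  have hp2 : ¬ (p : ℤ) ∣ 2 := fun h => hp ((h.mul_right Q).mul_right Δ)
  have hpQ : ¬ (p : ℤ) ∣ Q := fun h => hp ((h.mul_left 2).mul_right Δ)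
  have hpΔ : ¬ (p : ℤ) ∣ Δ := fun h => hp (h.mul_left (2 * Q))
  have hpne2 : p ≠ 2 := by rintro rfl; exact hp2 dvd_rfl
  obtain ⟨k, hk⟩ := hpp.odd_of_ne_two hpne2
  have hppos : 0 < p := hpp.pos
  -- the algebraically closed field of characteristic p
  set K := AlgebraicClosure (ZMod p) with hK
  letI : Field K := inferInstanceAs (Field (AlgebraicClosure (ZMod p)))
  have hinj : Function.Injective (algebraMap (ZMod p) K) := (algebraMap (ZMod p) K).injective
  have castzero : ∀ m : ℤ, ((m : K) = 0 ↔ (p : ℤ) ∣ m) := by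
    intro m
    rw [← map_intCast (algebraMap (ZMod p) K) m, map_eq_zero_iff _ hinj,
      ZMod.intCast_zmod_eq_zero_iff_dvd]
  have two_ne : (2 : K) ≠ 0 := by
    intro h
    exact hp2 ((castzero 2).mp (by exact_mod_cast h))
  obtain ⟨δ, hδ⟩ := IsAlgClosed.exists_pow_nat_eq ((Δ : ℤ) : K) (n := 2) (by norm_num)
  have hδne : δ ≠ 0 := by
    intro h
    apply hpΔ
    rw [← castzero Δ, ← hδ, h]
    ring
  have hδ' : δ ^ 2 = (P : K) ^ 2 - 4 * (Q : K) := by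
    rw [hδ, hΔ]; push_cast; ring
  set α : K := ((P : K) + δ) / 2 with hα
  set β : K := ((P : K) - δ) / 2 with hβ
  have hsum : α + β = (P : K) := by rw [hα, hβ]; field_simp; ring
  have hprod : α * β = (Q : K) := by
    rw [hα, hβ]; field_simp; linear_combination -hδ'
  have hdiff : α - β = δ := by rw [hα, hβ]; field_simp; ring
  have hform := lucas_formulas P Q α β hsum hprod
  -- Frobenius
  have hPfix : (P : K) ^ p = (P : K) := by
    rw [← map_intCast (algebraMap (ZMod p) K) P, ← map_pow, ZMod.pow_card]
  have h2fix : (2 : K) ^ p = (2 : K) := by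
    have : ((2 : ℤ) : K) ^ p = ((2 : ℤ) : K) := by
      rw [← map_intCast (algebraMap (ZMod p) K) 2, ← map_pow, ZMod.pow_card]
    exact_mod_cast this
  have hεpow : ((legendreSym p Δ : ℤ) : K) = ((Δ : ℤ) : K) ^ (p / 2) := by
    have h := legendreSym.eq_pow p Δ
    have := congrArg (algebraMap (ZMod p) K) h
    rwa [map_intCast, map_pow, map_intCast] at this
  have hpk : p = 2 * (p / 2) + 1 := by omega
  have hδp : δ ^ p = ((legendreSym p Δ : ℤ) : K) * δ := by
    rw [hεpow, ← hδ, ← pow_mul, ← pow_succ]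
    exact congrArg (fun n => δ ^ n) hpk
  have hfα : α ^ p = ((P : K) + ((legendreSym p Δ : ℤ) : K) * δ) / 2 := by
    rw [hα, div_pow, add_pow_char _ _ p, hPfix, hδp, h2fix]
  have hfβ : β ^ p = ((P : K) - ((legendreSym p Δ : ℤ) : K) * δ) / 2 := by
    rw [hβ, div_pow, sub_pow_char, hPfix, hδp, h2fix]
  -- U_p ≡ ε and V_p ≡ P
  have hUp : (lucasU P Q p : K) = ((legendreSym p Δ : ℤ) : K) := by
    have h1 := (hform p).1
    rw [hdiff, hfα, hfβ] at h1
    apply mul_right_cancel₀ hδne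
    rw [h1]; field_simp; ring
  have hVp : (lucasV P Q p : K) = (P : K) := by
    have h1 := (hform p).2
    rw [hfα, hfβ] at h1
    rw [h1]; field_simp; ring
  -- doubling
  have hUV : ∀ n, (p : ℤ) ∣ lucasU P Q (2 * n) →
      (p : ℤ) ∣ lucasU P Q n ∨ (p : ℤ) ∣ lucasV P Q n := by
    intro n hn
    have h1 := (hform (2 * n)).1
    have h2 := (hform n).1
    have h3 := (hform n).2
    rw [hdiff] at h1 h2
    have key : (lucasU P Q (2 * n) : K) * δ =
        ((lucasU P Q n : K) * (lucasV P Q n : K)) * δ := by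
      rw [h1, mul_comm 2 n, pow_mul, pow_mul]
      linear_combination -(lucasV P Q n : K) * h2 - (α ^ n - β ^ n) * h3
    have key2 : (lucasU P Q (2 * n) : K) = (lucasU P Q n : K) * (lucasV P Q n : K) :=
      mul_right_cancel₀ hδne key
    have h0 : (lucasU P Q n : K) * (lucasV P Q n : K) = 0 := by
      rw [← key2, castzero]; exact hn
    rcases mul_eq_zero.mp h0 with h | h
    · exact Or.inl ((castzero _).mp h)
    · exact Or.inr ((castzero _).mp h)
  -- Legendre symbol is ±1
  have hΔmod : ((Δ : ℤ) : ZMod p) ≠ 0 := by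
    rw [Ne, ZMod.intCast_zmod_eq_zero_iff_dvd]; exact hpΔ
  rcases legendreSym.eq_one_or_neg_one p hΔmod with h1 | h1
  · -- ε = 1 : p | U_{p-1}
    have hnat : p - 1 = 2 ^ r * s := by
      rw [h1] at hrs
      have : ((2 ^ r * s : ℕ) : ℤ) = (p : ℤ) - 1 := by push_cast; linarith
      omega
    have hU : (p : ℤ) ∣ lucasU P Q (p - 1) := by
      have hid := lucas_QU P Q (p - 1)
      rw [show p - 1 + 1 = p from by omega] at hid
      have hidK := congrArg (fun m : ℤ => (m : K)) hid
      simp only [Int.cast_mul, Int.cast_sub, Int.cast_ofNat] at hidK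
      push_cast at hidK
      rw [hUp, hVp, h1] at hidK
      have h2Q : ((2 * Q : ℤ) : K) ≠ 0 := by
        rw [Ne, castzero]
        intro h
        rcases (hprime.dvd_mul.mp h) with h | h
        · exact hp2 h
        · exact hpQ h
      push_cast at h2Q
      have : (lucasU P Q (p - 1) : K) = 0 := by
        have h0 : (2 : K) * (Q : K) * (lucasU P Q (p - 1) : K) = 0 := by
          push_cast at hidK ⊢
          linear_combination hidK
        exact (mul_eq_zero.mp h0).resolve_left (by push_cast; exact h2Q)
      exact (castzero _).mp this
    rw [hnat] at hU
    exact lucas_descent P Q p hUV r s hU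
  · -- ε = -1 : p | U_{p+1}
    have hnat : p + 1 = 2 ^ r * s := by
      rw [h1] at hrs
      have : ((2 ^ r * s : ℕ) : ℤ) = (p : ℤ) + 1 := by push_cast; linarith
      omega
    have hU : (p : ℤ) ∣ lucasU P Q (p + 1) := by
      have hid := lucasV_eq_U P Q p
      have hidK := congrArg (fun m : ℤ => (m : K)) hid
      push_cast at hidK
      rw [hUp, hVp, h1] at hidK
      have : (lucasU P Q (p + 1) : K) = 0 := by
        have h0 : (2 : K) * (lucasU P Q (p + 1) : K) = 0 := by
          push_cast at hidK ⊢
          linear_combination -hidK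
        exact (mul_eq_zero.mp h0).resolve_left two_ne
      exact (castzero _).mp this
    rw [hnat] at hU
    exact lucas_descent P Q p hUV r s hU
end

section
/- Let b be an integer, Δ = b² - 4, U_n = U_n(b,1) and V_n = V_n(b,1) the Lucas sequences with parameters (b,1). Let p be a prime not dividing 2Δ, and write p - (Δ/p) = 2^r·s with s odd. Then either U_s ≡ 0 (mod p) and V_s ≡ ±2 (mod p), or V_{2^t·s} ≡ 0 (mod p) for some t with 0 ≤ t < r - 1. -/
lemma lucas_closed {R : Type*} [CommRing R] (b : ℤ) (α β : R)
    (h1 : α * β = 1) (h2 : α + β = (b : R)) :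
    ∀ n : ℕ, ((lucasU b 1 n : R) * (α - β) = α ^ n - β ^ n) ∧
      ((lucasV b 1 n : R) = α ^ n + β ^ n)
  | 0 => by norm_num [lucasU, lucasV]
  | 1 => by
      constructor
      · simp [lucasU]
      · simpa [lucasV] using h2.symm
  | (n + 2) => by
      obtain ⟨hU1, hV1⟩ := lucas_closed b α β h1 h2 (n + 1)
      obtain ⟨hU0, hV0⟩ := lucas_closed b α β h1 h2 n
      constructor
      · simp only [lucasU]
        push_cast
        rw [← h2]
        linear_combination (α + β) * hU1 - hU0 + (α ^ n - β ^ n) * h1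
      · simp only [lucasV]
        push_cast
        rw [← h2]
        linear_combination (α + β) * hV1 - hV0 + (α ^ n + β ^ n) * h1

open Polynomial in
lemma lucas_key (b : ℤ) (p : ℕ) [Fact p.Prime] (hp2 : p ≠ 2)
    (hpΔ : ¬ (p : ℤ) ∣ b ^ 2 - 4) :
    (∀ k : ℕ, (p:ℤ) ∣ lucasU b 1 (2 * k) - lucasU b 1 k * lucasV b 1 k) ∧
    (∀ k : ℕ, (p:ℤ) ∣ lucasV b 1 k ^ 2 - (b ^ 2 - 4) * lucasU b 1 k ^ 2 - 4) ∧
    (∀ n : ℕ, (p:ℤ) - legendreSym p (b ^ 2 - 4) = 2 * n → (p:ℤ) ∣ lucasU b 1 n) := by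
  have hpP : p.Prime := Fact.out
  have hΔ0 : ((b ^ 2 - 4 : ℤ) : ZMod p) ≠ 0 := by
    rwa [Ne, ZMod.intCast_zmod_eq_zero_iff_dvd]
  set Δ' : ZMod p := ((b ^ 2 - 4 : ℤ) : ZMod p) with hΔ'
  set f : (ZMod p)[X] := X ^ 2 - C Δ' with hf
  have hfd : f.degree = 2 := by
    simpa [hf] using degree_X_pow_sub_C (n := 2) (by norm_num) Δ'
  set A := AdjoinRoot f with hA
  set d : A := AdjoinRoot.root f with hd'
  have hcast : ∀ x : ℤ, (x : A) = AdjoinRoot.mk f (C ((x : ZMod p))) := by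
    intro x
    rw [AdjoinRoot.mk_C]
    exact (map_intCast (AdjoinRoot.of f) x).symm
  have hker : ∀ g : (ZMod p)[X], g.degree < 2 → AdjoinRoot.mk f g = 0 → g = 0 := by
    intro g hg h0
    exact Polynomial.eq_zero_of_dvd_of_degree_lt (AdjoinRoot.mk_eq_zero.mp h0) (by rw [hfd]; exact hg)
  have hK1 : ∀ x : ℤ, (x : A) = 0 → (p:ℤ) ∣ x := by
    intro x hx
    rw [hcast x] at hx
    have h := hker _ (lt_of_le_of_lt (degree_C_le) (by decide)) hx
    rw [← ZMod.intCast_zmod_eq_zero_iff_dvd]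
    exact Polynomial.C_eq_zero.mp h
  have hK2 : ∀ x : ℤ, (x : A) * d = 0 → (p:ℤ) ∣ x := by
    intro x hx
    rw [hcast x, hd', ← AdjoinRoot.mk_X, ← map_mul] at hx
    have h := hker _ (lt_of_le_of_lt (degree_C_mul_X_le _) (by decide)) hx
    rcases mul_eq_zero.mp h with h' | h'
    · rw [← ZMod.intCast_zmod_eq_zero_iff_dvd]
      exact Polynomial.C_eq_zero.mp h'
    · exact absurd h' Polynomial.X_ne_zero
  have hd2 : d ^ 2 = ((b ^ 2 - 4 : ℤ) : A) := by
    have h := AdjoinRoot.mk_self (f := f)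
    rw [hf, map_sub, map_pow, AdjoinRoot.mk_X, AdjoinRoot.mk_C, sub_eq_zero] at h
    rw [hd', h]
    exact (map_intCast (AdjoinRoot.of f) _)
  have h2Z : (2 : ZMod p) ≠ 0 := by
    have : ((2 : ℕ) : ZMod p) ≠ 0 := by
      rw [Ne, ZMod.natCast_eq_zero_iff]
      intro h
      exact hp2 ((Nat.prime_dvd_prime_iff_eq hpP Nat.prime_two).mp h)
    simpa using this
  set e : A := AdjoinRoot.of f (2⁻¹ : ZMod p) with he
  have h2e : (2 : A) * e = 1 := by
    have : ((2 : ZMod p) : A) * e = 1 := by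
      show AdjoinRoot.of f (2 : ZMod p) * e = 1
      rw [he, ← map_mul, mul_inv_cancel₀ h2Z, map_one]
    rwa [map_ofNat] at this
  set α : A := ((b : A) + d) * e with hα
  set β : A := ((b : A) - d) * e with hβ
  have hd2' : d ^ 2 = (b : A) ^ 2 - 4 := by rw [hd2]; push_cast; ring
  have hαβ : α * β = 1 := by
    rw [hα, hβ]
    linear_combination (-(e^2)) * hd2' + (2*e + 1) * h2e
  have hsum : α + β = (b : A) := by
    rw [hα, hβ]
    linear_combination (b : A) * h2e
  have hdiff : α - β = d := by
    rw [hα, hβ]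
    linear_combination d * h2e
  have hLC := lucas_closed b α β hαβ hsum
  refine ⟨?_, ?_, ?_⟩
  · intro k
    apply hK2
    have hU2k := (hLC (2 * k)).1
    have hUk := (hLC k).1
    have hVk := (hLC k).2
    rw [hdiff] at hU2k hUk
    push_cast
    linear_combination hU2k - ((lucasU b 1 k : A) * d) * hVk - (α ^ k + β ^ k) * hUk
  · intro k
    apply hK1
    have hUk := (hLC k).1
    have hVk := (hLC k).2
    rw [hdiff] at hUk
    have hk1 : α ^ k * β ^ k = 1 := by rw [← mul_pow, hαβ, one_pow]
    push_cast
    linear_combination ((lucasV b 1 k : A) + α ^ k + β ^ k) * hVk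
      + (lucasU b 1 k : A) ^ 2 * hd2'
      - ((lucasU b 1 k : A) * d + α ^ k - β ^ k) * hUk + 4 * hk1
  · intro n hn
    have hof : Function.Injective (AdjoinRoot.of f) := by
      intro x y hxy
      have h0 : AdjoinRoot.of f (x - y) = 0 := by rw [map_sub, hxy, sub_self]
      have h1 : C (x - y) = (0 : (ZMod p)[X]) :=
        hker _ (lt_of_le_of_lt degree_C_le (by decide)) h0
      exact sub_eq_zero.mp (Polynomial.C_eq_zero.mp h1)
    haveI : CharP A p := charP_of_injective_ringHom hof p
    have hodd : p % 2 = 1 := Nat.odd_iff.mp (hpP.odd_of_ne_two hp2)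
    have hmap : ∀ c : ZMod p, (AdjoinRoot.of f c) ^ p = AdjoinRoot.of f c := by
      intro c; rw [← map_pow, ZMod.pow_card]
    have hbp : (b : A) ^ p = (b : A) := by
      rw [show (b : A) = AdjoinRoot.of f ((b : ℤ) : ZMod p) from (map_intCast _ b).symm]
      exact hmap _
    have hep : e ^ p = e := hmap _
    have hdp : d ^ p = ((legendreSym p (b ^ 2 - 4) : ℤ) : A) * d := by
      have h1 : d ^ p = (d ^ 2) ^ (p / 2) * d := by
        rw [← pow_mul, ← pow_succ]
        congr 1
        omega
      rw [h1, hd2]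
      congr 1
      rw [show ((b ^ 2 - 4 : ℤ) : A) = AdjoinRoot.of f (((b ^ 2 - 4 : ℤ)) : ZMod p) from
          (map_intCast _ _).symm, ← map_pow, ← legendreSym.eq_pow, map_intCast]
    have hε : legendreSym p (b ^ 2 - 4) = 1 ∨ legendreSym p (b ^ 2 - 4) = -1 := by
      have h := legendreSym.sq_one (p := p) (a := b ^ 2 - 4) hΔ0
      have h' : legendreSym p (b ^ 2 - 4) * legendreSym p (b ^ 2 - 4) = 1 := by
        rw [← pow_two]; exact h
      exact Int.isUnit_iff.mp (IsUnit.of_mul_eq_one _ h')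
    have hα2n : α ^ (2 * n) = 1 := by
      rcases hε with hε1 | hε1
      · have hpn : p = 2 * n + 1 := by rw [hε1] at hn; omega
        have hαp : α ^ p = α := by
          rw [hα, mul_pow, add_pow_char, hbp, hdp, hε1, hep]
          push_cast
          ring
        have hexp : 2 * n + 1 = p := by omega
        calc α ^ (2 * n) = α ^ (2 * n) * (α * β) := by rw [hαβ, mul_one]
          _ = α ^ (2 * n + 1) * β := by ring
          _ = α ^ p * β := by rw [hexp]
          _ = α * β := by rw [hαp]
          _ = 1 := hαβ
      · have hpn : p + 1 = 2 * n := by rw [hε1] at hn; omega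
        have hαp : α ^ p = β := by
          rw [hα, mul_pow, add_pow_char, hbp, hdp, hε1, hep, hβ]
          push_cast
          ring
        have hexp : 2 * n = p + 1 := by omega
        calc α ^ (2 * n) = α ^ (p + 1) := by rw [hexp]
          _ = α ^ p * α := by rw [pow_succ]
          _ = β * α := by rw [hαp]
          _ = 1 := by rw [mul_comm]; exact hαβ
    have hn1 : α ^ n * β ^ n = 1 := by rw [← mul_pow, hαβ, one_pow]
    have hαn : α ^ n = β ^ n := by
      calc α ^ n = (α ^ n * β ^ n) * α ^ n := by rw [hn1, one_mul]
        _ = β ^ n * α ^ (2 * n) := by ring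
        _ = β ^ n := by rw [hα2n, mul_one]
    apply hK2
    have hUn := (hLC n).1
    rw [hdiff] at hUn
    rw [hUn, hαn, sub_self]

theorem stmt_2 (b : ℤ) (Δ : ℤ) (hΔ : Δ = b ^ 2 - 4) (p : ℕ) [Fact p.Prime]
    (hp : ¬ (p : ℤ) ∣ 2 * Δ) (r s : ℕ) (hs : Odd s)
    (hrs : (p : ℤ) - legendreSym p Δ = 2 ^ r * s) :
    ((p : ℤ) ∣ lucasU b 1 s ∧ ((p : ℤ) ∣ lucasV b 1 s - 2 ∨ (p : ℤ) ∣ lucasV b 1 s + 2)) ∨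
      ∃ t, t + 1 < r ∧ (p : ℤ) ∣ lucasV b 1 (2 ^ t * s) := by
  subst hΔ
  have hpP : p.Prime := Fact.out
  have hp2 : p ≠ 2 := by
    rintro rfl
    exact hp (by push_cast; exact dvd_mul_right 2 _)
  have hpΔ : ¬ (p : ℤ) ∣ b ^ 2 - 4 := fun h => hp (h.mul_left 2)
  obtain ⟨hdouble, hquad, hmain⟩ := lucas_key b p hp2 hpΔ
  have hΔ0 : ((b ^ 2 - 4 : ℤ) : ZMod p) ≠ 0 := by
    rwa [Ne, ZMod.intCast_zmod_eq_zero_iff_dvd]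
  have hε : legendreSym p (b ^ 2 - 4) = 1 ∨ legendreSym p (b ^ 2 - 4) = -1 := by
    have h := legendreSym.sq_one (p := p) (a := b ^ 2 - 4) hΔ0
    have h' : legendreSym p (b ^ 2 - 4) * legendreSym p (b ^ 2 - 4) = 1 := by
      rw [← pow_two]; exact h
    exact Int.isUnit_iff.mp (IsUnit.of_mul_eq_one _ h')
  have hpodd : p % 2 = 1 := Nat.odd_iff.mp (hpP.odd_of_ne_two hp2)
  have hsodd : s % 2 = 1 := Nat.odd_iff.mp hs
  have hr : 1 ≤ r := by
    by_contra h
    have hr0 : r = 0 := by omega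
    subst hr0
    rcases hε with h1 | h1 <;> rw [h1] at hrs <;>
      · simp only [pow_zero, one_mul] at hrs
        omega
  obtain ⟨r', rfl⟩ : ∃ r', r = r' + 1 := ⟨r - 1, by omega⟩
  have hU : (p : ℤ) ∣ lucasU b 1 (2 ^ r' * s) := by
    apply hmain
    rw [hrs]
    push_cast
    ring
  have descent : ∀ j : ℕ, (p : ℤ) ∣ lucasU b 1 (2 ^ j * s) →
      (p : ℤ) ∣ lucasU b 1 s ∨ ∃ t, t < j ∧ (p : ℤ) ∣ lucasV b 1 (2 ^ t * s) := by
    intro j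
    induction j with
    | zero => intro h; left; simpa using h
    | succ j ih =>
      intro h
      have h2 : (p : ℤ) ∣ lucasU b 1 (2 ^ j * s) * lucasV b 1 (2 ^ j * s) := by
        have hd := hdouble (2 ^ j * s)
        have h' : 2 ^ (j + 1) * s = 2 * (2 ^ j * s) := by ring
        rw [h'] at h
        have := dvd_sub h hd
        simpa using this
      rcases (Int.Prime.dvd_mul' hpP h2) with hU' | hV'
      · rcases ih hU' with h | ⟨t, ht, hV⟩
        · exact Or.inl h
        · exact Or.inr ⟨t, ht.trans (Nat.lt_succ_self j), hV⟩
      · exact Or.inr ⟨j, Nat.lt_succ_self j, hV'⟩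
  rcases descent r' hU with hUs | ⟨t, ht, hV⟩
  · left
    refine ⟨hUs, ?_⟩
    have hq := hquad s
    have h1 : (p : ℤ) ∣ (b ^ 2 - 4) * lucasU b 1 s ^ 2 := by
      exact dvd_mul_of_dvd_right (dvd_pow hUs two_ne_zero) _
    have h2 : (p : ℤ) ∣ (lucasV b 1 s - 2) * (lucasV b 1 s + 2) := by
      have h3 := dvd_add hq h1
      have h4 : lucasV b 1 s ^ 2 - (b ^ 2 - 4) * lucasU b 1 s ^ 2 - 4 +
          (b ^ 2 - 4) * lucasU b 1 s ^ 2 = (lucasV b 1 s - 2) * (lucasV b 1 s + 2) := by ring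
      rwa [h4] at h3
    rcases Int.Prime.dvd_mul' hpP h2 with h | h
    · exact Or.inl h
    · exact Or.inr h
  · exact Or.inr ⟨t, by omega, hV⟩
end

section
/- Let p be an odd prime and f ∈ 𝔽_p[x] monic squarefree of degree d with f(0) ≠ 0 and disc(f) ≠ 0. Let S be the number of monic irreducible factors of f of even degree. Then (-1)^S equals the Legendre symbol (disc(f)/p). -/
open Polynomial UniqueFactorizationMonoid

theorem stmt_6 (p : ℕ) [Fact p.Prime] (hodd : p ≠ 2)
    (f : (ZMod p)[X]) (d : ℕ) (hd : f.natDegree = d) (hmonic : f.Monic)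
    (hsqf : Squarefree f) (h0 : f.eval 0 ≠ 0)
    (e : Fin d → AlgebraicClosure (ZMod p))
    (he : f.map (algebraMap (ZMod p) (AlgebraicClosure (ZMod p))) =
      ∏ i : Fin d, (X - C (e i)))
    (Δ : ZMod p)
    (hΔ : algebraMap (ZMod p) (AlgebraicClosure (ZMod p)) Δ =
      ∏ i : Fin d, ∏ j ∈ Finset.Ioi i, (e i - e j) ^ 2)
    (hΔ0 : Δ ≠ 0)
    (S : ℕ)
    (hS : S = ((normalizedFactors f).filter fun q => Even q.natDegree).card) :
    ((-1 : ℤ) ^ S) = legendreSym p (Δ.val : ℤ) := by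
  classical
  have hp : p.Prime := Fact.out
  set A : ZMod p →+* AlgebraicClosure (ZMod p) :=
    algebraMap (ZMod p) (AlgebraicClosure (ZMod p)) with hAdef
  have hAinj : Function.Injective A := A.injective
  have hA_pow : ∀ a : ZMod p, (A a) ^ p = A a := fun a => by
    rw [← map_pow, ZMod.pow_card]
  have hcard : Fintype.card (ZMod p) = p := ZMod.card p
  have hroots : (X ^ p - X : (ZMod p)[X]).roots = Finset.univ.val := by
    simpa [hcard] using FiniteField.roots_X_pow_card_sub_X (ZMod p)
  have hPsplits : Splits (X ^ p - X : (ZMod p)[X]) := by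
    rw [splits_iff_card_roots, hroots,
      FiniteField.X_pow_card_sub_X_natDegree_eq _ hp.one_lt]
    simpa using hcard
  have F1 : ∀ x : AlgebraicClosure (ZMod p), x ^ p = x → ∃ a : ZMod p, A a = x := by
    intro x hx
    have hne : ((X ^ p - X : (ZMod p)[X]).map A) ≠ 0 :=
      (Polynomial.map_ne_zero_iff hAinj).mpr
        (FiniteField.X_pow_card_sub_X_ne_zero _ hp.one_lt)
    have hx' : x ∈ ((X ^ p - X : (ZMod p)[X]).map A).roots := by
      rw [mem_roots hne]
      simp [Polynomial.IsRoot, hx]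
    rw [hPsplits.roots_map A, hroots] at hx'
    obtain ⟨a, -, ha⟩ := Multiset.mem_map.mp hx'
    exact ⟨a, ha⟩
  have hcomp : (frobenius (AlgebraicClosure (ZMod p)) p).comp A = A := by
    ext a
    simp only [RingHom.comp_apply, frobenius_def]
    exact hA_pow a
  have key : ∀ (q : (ZMod p)[X]) (x : AlgebraicClosure (ZMod p)),
      aeval (x ^ p) q = (aeval x q) ^ p := by
    intro q x
    rw [aeval_def, aeval_def, eval₂_eq_eval_map, eval₂_eq_eval_map]
    have h1 : (q.map A) = (q.map A).map (frobenius (AlgebraicClosure (ZMod p)) p) := by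
      rw [Polynomial.map_map, hcomp]
    conv_lhs => rw [h1, show x ^ p = frobenius (AlgebraicClosure (ZMod p)) p x from rfl]
    rw [Polynomial.eval_map, Polynomial.eval₂_at_apply, frobenius_def]
  have haeval : ∀ i, aeval (e i) f = 0 := by
    intro i
    rw [aeval_def, eval₂_eq_eval_map, he, Polynomial.eval_prod]
    exact Finset.prod_eq_zero (Finset.mem_univ i) (by simp)
  have hroot' : ∀ x : AlgebraicClosure (ZMod p), aeval x f = 0 → ∃ j, e j = x := by
    intro x hx
    rw [aeval_def, eval₂_eq_eval_map, he, Polynomial.eval_prod] at hx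
    obtain ⟨j, -, hj⟩ := Finset.prod_eq_zero_iff.mp hx
    simp only [eval_sub, eval_X, eval_C, sub_eq_zero] at hj
    exact ⟨j, hj.symm⟩
  have einj : Function.Injective e := by
    have key2 : ∀ i j : Fin d, i < j → e i ≠ e j := by
      intro i j hlt heq
      have h2 : A Δ ≠ 0 := fun h => hΔ0 (hAinj (by rw [h, map_zero]))
      rw [hΔ] at h2
      have h3 := Finset.prod_ne_zero_iff.mp h2 i (Finset.mem_univ i)
      have h4 := Finset.prod_ne_zero_iff.mp h3 j (Finset.mem_Ioi.mpr hlt)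
      exact h4 (by rw [heq, sub_self]; exact zero_pow two_ne_zero)
    intro i j hij
    by_contra hne
    rcases lt_trichotomy i j with h | h | h
    · exact key2 i j h hij
    · exact hne h
    · exact key2 j i h hij.symm
  have hex : ∀ i, ∃ j, e j = (e i) ^ p := fun i =>
    hroot' _ (by rw [key, haeval i]; exact zero_pow hp.ne_zero)
  set σ0 : Fin d → Fin d := fun i => (hex i).choose with hσ0def
  have hσ0 : ∀ i, e (σ0 i) = (e i) ^ p := fun i => (hex i).choose_spec
  have σ0inj : Function.Injective σ0 := by
    intro i j hij
    apply einj
    have h1 : e (σ0 i) = e (σ0 j) := congrArg e hij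
    rw [hσ0, hσ0] at h1
    exact frobenius_inj (AlgebraicClosure (ZMod p)) p
      (by rwa [frobenius_def, frobenius_def])
  set σ : Equiv.Perm (Fin d) :=
    Equiv.ofBijective σ0 (Finite.injective_iff_bijective.mp σ0inj) with hσdef
  have hσapp : ∀ i, σ i = σ0 i := fun i => rfl
  have hσe : ∀ i, e (σ i) = (e i) ^ p := fun i => hσ0 i
  set D : AlgebraicClosure (ZMod p) := (Matrix.vandermonde e).det with hDdef
  have hD2 : D ^ 2 = A Δ := by
    rw [hΔ, hDdef, Matrix.det_vandermonde, ← Finset.prod_pow]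
    refine Finset.prod_congr rfl fun i _ => ?_
    rw [← Finset.prod_pow]
    exact Finset.prod_congr rfl fun j _ => by ring
  have hADne : A Δ ≠ 0 := fun h => hΔ0 (hAinj (by rw [h, map_zero]))
  have hDne : D ≠ 0 := by
    intro h
    rw [h] at hD2
    exact hADne (by rw [← hD2]; ring)
  have hDp : D ^ p = ((Equiv.Perm.sign σ : ℤ) : AlgebraicClosure (ZMod p)) * D := by
    have h1 : frobenius (AlgebraicClosure (ZMod p)) p D =
        ((frobenius (AlgebraicClosure (ZMod p)) p).mapMatrix (Matrix.vandermonde e)).det :=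
      RingHom.map_det _ _
    have h2 : (frobenius (AlgebraicClosure (ZMod p)) p).mapMatrix (Matrix.vandermonde e) =
        (Matrix.vandermonde e).submatrix σ id := by
      ext i j
      simp only [RingHom.mapMatrix_apply, Matrix.map_apply, Matrix.submatrix_apply,
        Matrix.vandermonde_apply, frobenius_def, id_eq]
      rw [← pow_mul, mul_comm, pow_mul, ← hσe]
    rw [frobenius_def] at h1
    rw [h1, h2, Matrix.det_permute]
  have hval : ((Δ.val : ℤ) : ZMod p) = Δ := by
    push_cast
    simp [ZMod.natCast_val, ZMod.cast_id]
  have hvalne : ((Δ.val : ℤ) : ZMod p) ≠ 0 := by rw [hval]; exact hΔ0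
  have h2ne : (2 : AlgebraicClosure (ZMod p)) ≠ 0 := by
    intro h
    have h' := (CharP.cast_eq_zero_iff (AlgebraicClosure (ZMod p)) p 2).mp (by exact_mod_cast h)
    exact hodd ((Nat.prime_dvd_prime_iff_eq hp Nat.prime_two).mp h')
  have hodd' : Odd p := hp.odd_of_ne_two hodd
  have hL1 : legendreSym p (Δ.val : ℤ) = ((Equiv.Perm.sign σ : ℤˣ) : ℤ) := by
    rcases Int.units_eq_one_or (Equiv.Perm.sign σ) with hs | hs
    · rw [hs, Units.val_one]
      have hDfix : D ^ p = D := by rw [hDp, hs]; simp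
      obtain ⟨a, ha⟩ := F1 D hDfix
      have hΔa : Δ = a ^ 2 := hAinj (by rw [map_pow, ha, hD2])
      rw [legendreSym.eq_one_iff p hvalne, hval]
      exact ⟨a, by rw [hΔa]; ring⟩
    · rw [hs]
      have hDneg : D ^ p = -D := by
        rw [hDp, hs]; push_cast; ring
      simp only [Units.val_neg, Units.val_one]
      rw [legendreSym.eq_neg_one_iff p, hval]
      rintro ⟨a, rfl⟩
      have haz : A a ≠ 0 := by
        intro h
        exact hΔ0 (by rw [show a = 0 from hAinj (by rw [h, map_zero]), mul_zero])
      have hsq' : (A a) ^ 2 = D ^ 2 := by rw [hD2, map_mul]; ring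
      have hsq : (A a - D) * (A a + D) = 0 := by linear_combination hsq'
      have hfix : (A a) ^ p = A a := hA_pow a
      have hDfix : D ^ p = D := by
        rcases mul_eq_zero.mp hsq with h | h
        · rw [← sub_eq_zero.mp h, hfix]
        · have hD' : D = -A a := by linear_combination h
          rw [hD', hodd'.neg_pow, hfix]
      have h2D : (2 : AlgebraicClosure (ZMod p)) * D = 0 := by
        linear_combination hDneg - hDfix
      rcases mul_eq_zero.mp h2D with h' | h'
      · exact h2ne h'
      · exact hDne h'

  -- ===== Part 2 : factors vs orbits =====
  have hf0 : f ≠ 0 := hmonic.ne_zero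
  set m : Fin d → (ZMod p)[X] := fun i => minpoly (ZMod p) (e i) with hmdef
  have hint : ∀ i, IsIntegral (ZMod p) (e i) := fun i =>
    ⟨f, hmonic, by rw [← aeval_def]; exact haeval i⟩
  have hmmonic : ∀ i, (m i).Monic := fun i => minpoly.monic (hint i)
  have hmirr : ∀ i, Irreducible (m i) := fun i => minpoly.irreducible (hint i)
  have hmdvd : ∀ i, m i ∣ f := fun i => minpoly.dvd _ _ (haeval i)
  have hmpos : ∀ i, 0 < (m i).natDegree := fun i => minpoly.natDegree_pos (hint i)
  have P3 : ∀ i j, aeval (e j) (m i) = 0 → m j = m i := fun i j h =>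
    (minpoly.eq_of_irreducible_of_monic (hmirr i) h (hmmonic i)).symm
  have hgne : (f.map A) ≠ 0 := (Polynomial.map_ne_zero_iff hAinj).mpr hf0
  have hprodform : (∏ i : Fin d, (X - C (e i))) =
      (((Finset.univ.val.map e)).map (fun a => (X : (AlgebraicClosure (ZMod p))[X]) - C a)).prod := by
    rw [Multiset.map_map, Finset.prod_eq_multiset_prod]
    rfl
  have hgroots : (f.map A).roots = Finset.univ.val.map e := by
    rw [he, hprodform, Polynomial.roots_multiset_prod_X_sub_C]
  have hsplitsf : Splits (f.map A) := by
    rw [splits_iff_exists_multiset]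
    refine ⟨Finset.univ.val.map e, ?_⟩
    rw [(hmonic.map A).leadingCoeff, Polynomial.C_1, one_mul, he, hprodform]
  have hnodupuniv : (Finset.univ.val.map e).Nodup :=
    Multiset.Nodup.map einj Finset.univ.nodup
  -- P4 : fibers of m have size equal to the degree
  have P4 : ∀ i, (Finset.univ.filter fun j => m j = m i).card = (m i).natDegree := by
    intro i
    have hsp : Splits ((m i).map A) := hsplitsf.of_dvd hgne (Polynomial.map_dvd A (hmdvd i))
    have hmapne : ((m i).map A) ≠ 0 :=
      (Polynomial.map_ne_zero_iff hAinj).mpr (hmmonic i).ne_zero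
    have hle : ((m i).map A).roots ≤ (f.map A).roots :=
      roots.le_of_dvd hgne (Polynomial.map_dvd A (hmdvd i))
    rw [hgroots] at hle
    have hnodup : ((m i).map A).roots.Nodup := Multiset.nodup_of_le hle hnodupuniv
    have heq : ((m i).map A).roots = (Finset.univ.filter fun j => m j = m i).val.map e := by
      apply le_antisymm
      · rw [Multiset.le_iff_subset hnodup]
        intro x hx
        have hxf : x ∈ Finset.univ.val.map e := Multiset.mem_of_le hle hx
        obtain ⟨j, -, rfl⟩ := Multiset.mem_map.mp hxf
        refine Multiset.mem_map.mpr ⟨j, ?_, rfl⟩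
        have hz : aeval (e j) (m i) = 0 := by
          have h' := (Polynomial.mem_roots'.mp hx).2
          rwa [aeval_def, eval₂_eq_eval_map]
        exact Finset.mem_val.mpr (Finset.mem_filter.mpr ⟨Finset.mem_univ j, P3 i j hz⟩)
      · rw [Multiset.le_iff_subset (Multiset.Nodup.map einj (Finset.univ.filter _).nodup)]
        intro x hx
        obtain ⟨j, hj, rfl⟩ := Multiset.mem_map.mp hx
        have hji : m j = m i := (Finset.mem_filter.mp (Finset.mem_val.mp hj)).2
        rw [Polynomial.mem_roots hmapne]
        show eval (e j) ((m i).map A) = 0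
        rw [← eval₂_eq_eval_map, ← aeval_def, ← hji]
        exact minpoly.aeval _ _
    have hcard := congrArg Multiset.card heq
    rw [Multiset.card_map, ← hsp.natDegree_eq_card_roots, natDegree_map] at hcard
    exact hcard.symm
  -- P6 : each m i is a normalized factor
  have P6 : ∀ i, m i ∈ normalizedFactors f := by
    intro i
    obtain ⟨q, hq, hassoc⟩ :=
      UniqueFactorizationMonoid.exists_mem_normalizedFactors_of_dvd hf0 (hmirr i) (hmdvd i)
    have h1 : m i = q := hassoc.eq_of_normalized ((hmmonic i).normalize_eq_self)
      (normalize_normalized_factor q hq)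
    rwa [h1]
  -- P5 : each normalized factor is some m i
  have P5 : ∀ q ∈ normalizedFactors f, ∃ i, m i = q := by
    intro q hq
    have hqirr : Irreducible q := irreducible_of_normalized_factor q hq
    have hqdvd : q ∣ f := dvd_of_mem_normalizedFactors hq
    have hqmonic : q.Monic := by
      have h1 := normalize_normalized_factor q hq
      have h2 := Polynomial.monic_normalize (p := q) hqirr.ne_zero
      rwa [h1] at h2
    have hsp : Splits (q.map A) := hsplitsf.of_dvd hgne (Polynomial.map_dvd A hqdvd)
    have hdegpos : 0 < q.natDegree := hqirr.natDegree_pos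
    obtain ⟨x, hx⟩ := hsp.exists_eval_eq_zero
      (by rw [degree_map]; exact (Polynomial.natDegree_pos_iff_degree_pos.mp hdegpos).ne')
    rw [← eval₂_eq_eval_map] at hx
    have hxf : aeval x f = 0 := by
      obtain ⟨c, rfl⟩ := hqdvd
      rw [map_mul]
      rw [show aeval x q = 0 from by rw [aeval_def]; exact hx]
      rw [zero_mul]
    obtain ⟨i, rfl⟩ := hroot' x hxf
    exact ⟨i, minpoly.eq_of_irreducible_of_monic hqirr
      (by rw [aeval_def]; exact hx) hqmonic |>.symm⟩
  -- m is invariant under σ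
  have K1 : ∀ i, m (σ i) = m i := by
    intro i
    apply P3
    rw [hσe i, key, minpoly.aeval]
    exact zero_pow hp.ne_zero
  have Kpow : ∀ (k : ℕ) (i : Fin d), m ((σ ^ k) i) = m i := by
    intro k
    induction k with
    | zero => simp
    | succ n ih =>
      intro i
      rw [pow_succ, Equiv.Perm.mul_apply, ih (σ i), K1 i]
  have hiter : ∀ (k : ℕ) (i : Fin d), e ((σ ^ k) i) = (e i) ^ (p ^ k) := by
    intro k
    induction k with
    | zero => simp
    | succ n ih =>
      intro i
      rw [pow_succ, Equiv.Perm.mul_apply, ih (σ i), hσe i, ← pow_mul, ← pow_succ']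
  -- fibers of m are σ-orbits
  have star : ∀ i j, m j = m i → σ.SameCycle i j := by
    intro i j hm
    set n := Function.minimalPeriod (⇑σ) i with hn
    have hper : (⇑σ)^[n] i = i := Function.iterate_minimalPeriod
    have hnpos : 0 < n := by
      apply Function.minimalPeriod_pos_of_mem_periodicPts
      refine ⟨orderOf σ, orderOf_pos σ, ?_⟩
      show (⇑σ)^[orderOf σ] i = i
      rw [Equiv.Perm.iterate_eq_pow, pow_orderOf_eq_one]
      rfl
    have hpown : (σ ^ n) i = i := by rw [← Equiv.Perm.iterate_eq_pow]; exact hper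
    have hfixn : (e i) ^ (p ^ n) = e i := by
      rw [← hiter n i, hpown]
    -- the orbit polynomial
    set g : (AlgebraicClosure (ZMod p))[X] :=
      ∏ k ∈ Finset.range n, (X - C ((e i) ^ (p ^ k))) with hgdef
    have hgmonic : g.Monic := monic_prod_of_monic _ _ (fun k _ => monic_X_sub_C _)
    have hgmap : g.map (frobenius (AlgebraicClosure (ZMod p)) p) = g := by
      rw [hgdef, Polynomial.map_prod]
      have hfac : ∀ k, ((X : (AlgebraicClosure (ZMod p))[X]) - C ((e i) ^ (p ^ k))).map
          (frobenius (AlgebraicClosure (ZMod p)) p) = X - C ((e i) ^ (p ^ (k + 1))) := by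
        intro k
        rw [Polynomial.map_sub, Polynomial.map_X, Polynomial.map_C, frobenius_def,
          ← pow_mul, ← pow_succ]
      have h1 : ∀ k ∈ Finset.range n, ((X : (AlgebraicClosure (ZMod p))[X]) -
          C ((e i) ^ (p ^ k))).map (frobenius (AlgebraicClosure (ZMod p)) p) =
          X - C ((e i) ^ (p ^ (k + 1))) := fun k _ => hfac k
      rw [Finset.prod_congr rfl h1]
      -- rotation of the product
      set F : ℕ → (AlgebraicClosure (ZMod p))[X] := fun k => X - C ((e i) ^ (p ^ k)) with hF
      have hF0 : F n = F 0 := by rw [hF]; simp [hfixn]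
      have h2 : (∏ k ∈ Finset.range n, F (k + 1)) * F 0 = (∏ k ∈ Finset.range n, F k) * F 0 := by
        rw [← Finset.prod_range_succ', Finset.prod_range_succ, hF0]
      exact mul_right_cancel₀ (Polynomial.X_sub_C_ne_zero _) h2
    have hcoeff : ∀ t, g.coeff t ∈ Set.range ⇑A := by
      intro t
      have hct : (g.coeff t) ^ p = g.coeff t := by
        conv_rhs => rw [← hgmap]
        rw [Polynomial.coeff_map, frobenius_def]
      exact F1 _ hct
    obtain ⟨h, hmap, hdeg, hhmonic⟩ :=
      lifts_and_degree_eq_and_monic ((lifts_iff_coeff_lifts g).mpr hcoeff) hgmonic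
    have hhroot : aeval (e i) h = 0 := by
      rw [aeval_def, eval₂_eq_eval_map, hmap, hgdef, Polynomial.eval_prod]
      refine Finset.prod_eq_zero (Finset.mem_range.mpr hnpos) ?_
      simp
    have hmn : (m i).natDegree ≤ n := by
      have hgdeg : g.natDegree = n := by
        rw [hgdef, Polynomial.natDegree_prod_of_monic _ _ (fun k _ => monic_X_sub_C _)]
        simp only [Polynomial.natDegree_X_sub_C, Finset.sum_const, smul_eq_mul, mul_one,
          Finset.card_range]
      have hhdeg : h.natDegree = n := by
        rw [← hgdeg]
        exact natDegree_eq_of_degree_eq hdeg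
      rw [← hhdeg]
      exact Polynomial.natDegree_le_of_dvd (minpoly.dvd _ _ hhroot) hhmonic.ne_zero
    set O : Finset (Fin d) := (Finset.range n).image (fun k => (σ ^ k) i) with hO
    have hOcard : O.card = n := by
      rw [hO, Finset.card_image_of_injOn, Finset.card_range]
      intro a ha b hb hab
      have ha' : a ∈ Set.Iio n := Finset.mem_range.mp ha
      have hb' : b ∈ Set.Iio n := Finset.mem_range.mp hb
      apply Function.iterate_injOn_Iio_minimalPeriod ha' hb'
      show (⇑σ)^[a] i = (⇑σ)^[b] i
      rw [Equiv.Perm.iterate_eq_pow, Equiv.Perm.iterate_eq_pow]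
      exact hab
    have hOsub : O ⊆ Finset.univ.filter (fun j => m j = m i) := by
      intro x hx
      obtain ⟨k, -, rfl⟩ := Finset.mem_image.mp hx
      exact Finset.mem_filter.mpr ⟨Finset.mem_univ _, Kpow k i⟩
    have hOeq : O = Finset.univ.filter (fun j => m j = m i) := by
      apply Finset.eq_of_subset_of_card_le hOsub
      rw [hOcard, P4 i]
      exact hmn
    have hjO : j ∈ O := by
      rw [hOeq]
      exact Finset.mem_filter.mpr ⟨Finset.mem_univ _, hm⟩
    obtain ⟨k, -, hk⟩ := Finset.mem_image.mp hjO
    exact ⟨(k : ℤ), by rw [zpow_natCast]; exact hk⟩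
  -- fixed points of σ are exactly linear factors
  have fixiff : ∀ i, σ i = i ↔ (m i).natDegree = 1 := by
    intro i
    constructor
    · intro h
      have hfix : (e i) ^ p = e i := by rw [← hσe, h]
      obtain ⟨a, ha⟩ := F1 _ hfix
      have : m i = X - C a := by
        rw [hmdef]
        simp only
        rw [← ha]
        exact minpoly.eq_X_sub_C _ a
      rw [this, natDegree_X_sub_C]
    · intro h
      have heq := (hmmonic i).eq_X_add_C h
      have h0' : aeval (e i) (m i) = 0 := minpoly.aeval _ _
      rw [heq] at h0'
      simp only [map_add, aeval_X, aeval_C] at h0'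
      have hei : e i = A (-(m i).coeff 0) := by
        rw [map_neg]
        linear_combination h0'
      apply einj
      rw [hσe, hei, hA_pow]
  -- the finset of normalized factors
  have hnodupN : (normalizedFactors f).Nodup :=
    (squarefree_iff_nodup_normalizedFactors hf0).mp hsqf
  set Q : Finset (ZMod p)[X] := ⟨normalizedFactors f, hnodupN⟩ with hQdef
  have hmemQ : ∀ q, q ∈ Q ↔ q ∈ normalizedFactors f := fun q => Iff.rfl
  set Q2 : Finset (ZMod p)[X] := Q.filter (fun q => 2 ≤ q.natDegree) with hQ2def
  have hdegQ : ∀ q ∈ Q, 0 < q.natDegree := by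
    intro q hq
    obtain ⟨i, rfl⟩ := P5 q ((hmemQ q).mp hq)
    exact hmpos i
  have hsupp : σ.support = Finset.univ.filter (fun i => (m i).natDegree ≠ 1) := by
    ext i
    simp only [Equiv.Perm.mem_support, Finset.mem_filter, Finset.mem_univ, true_and]
    exact not_iff_not.mpr (fixiff i)
  -- support card = sum of degrees over Q2
  have hmQ2 : ∀ i ∈ σ.support, m i ∈ Q2 := by
    intro i hi
    rw [hQ2def, Finset.mem_filter]
    refine ⟨(hmemQ _).mpr (P6 i), ?_⟩
    rw [hsupp, Finset.mem_filter] at hi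
    have h1 := hi.2
    have h2 := hmpos i
    omega
  have hsuppcard : σ.support.card = ∑ q ∈ Q2, q.natDegree := by
    rw [Finset.card_eq_sum_card_fiberwise hmQ2]
    refine Finset.sum_congr rfl fun q hq => ?_
    have hqQ : q ∈ Q := Finset.mem_of_mem_filter q hq
    obtain ⟨i, rfl⟩ := P5 q ((hmemQ q).mp hqQ)
    have h2q : 2 ≤ (m i).natDegree := (Finset.mem_filter.mp hq).2
    have hfib : σ.support.filter (fun j => m j = m i) =
        Finset.univ.filter (fun j => m j = m i) := by
      ext j
      simp only [Finset.mem_filter, Finset.mem_univ, true_and]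
      constructor
      · exact fun hj => hj.2
      · intro hj
        refine ⟨?_, hj⟩
        rw [hsupp, Finset.mem_filter]
        exact ⟨Finset.mem_univ _, by rw [hj]; omega⟩
    rw [hfib, P4 i]
  -- number of cycles = card of Q2
  have hccount : Multiset.card σ.cycleType = Q2.card := by
    rw [Equiv.Perm.cycleType_def, Multiset.card_map]
    show σ.cycleFactorsFinset.card = Q2.card
    have hne : ∀ c ∈ σ.cycleFactorsFinset, c.support.Nonempty := by
      intro c hc
      rw [Finset.nonempty_iff_ne_empty, Ne, Equiv.Perm.support_eq_empty_iff]
      exact ((Equiv.Perm.mem_cycleFactorsFinset_iff.mp hc).1).ne_one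
    have hcyc : ∀ c (hc : c ∈ σ.cycleFactorsFinset) a, a ∈ c.support →
        c = σ.cycleOf a := fun c hc a ha => Equiv.Perm.cycle_is_cycleOf ha hc
    have hsc : ∀ c (hc : c ∈ σ.cycleFactorsFinset) a b, a ∈ c.support → b ∈ c.support →
        σ.SameCycle a b := by
      intro c hc a b ha hb
      have h1 : c = σ.cycleOf a := hcyc c hc a ha
      rw [h1] at hb
      exact (Equiv.Perm.mem_support_cycleOf_iff.mp hb).1
    have hsuppmem : ∀ c (hc : c ∈ σ.cycleFactorsFinset) a, a ∈ c.support →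
        a ∈ σ.support := by
      intro c hc a ha
      have h1 : c = σ.cycleOf a := hcyc c hc a ha
      rw [h1] at ha
      exact (Equiv.Perm.mem_support_cycleOf_iff.mp ha).2
    apply Finset.card_bij (fun c hc => m (c.support.min' (hne c hc)))
    · intro c hc
      have hmin := Finset.min'_mem c.support (hne c hc)
      have h1 : c.support.min' (hne c hc) ∈ σ.support := hsuppmem c hc _ hmin
      exact hmQ2 _ h1
    · intro c₁ hc₁ c₂ hc₂ hmeq
      have ha := Finset.min'_mem c₁.support (hne c₁ hc₁)
      have hb := Finset.min'_mem c₂.support (hne c₂ hc₂)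
      have hscab : σ.SameCycle (c₁.support.min' (hne c₁ hc₁)) (c₂.support.min' (hne c₂ hc₂)) :=
        star _ _ hmeq.symm
      rw [hcyc c₁ hc₁ _ ha, hcyc c₂ hc₂ _ hb]
      exact hscab.cycleOf_eq
    · intro q hq
      have hqQ : q ∈ Q := Finset.mem_of_mem_filter q hq
      obtain ⟨i, rfl⟩ := P5 q ((hmemQ q).mp hqQ)
      have h2q : 2 ≤ (m i).natDegree := (Finset.mem_filter.mp hq).2
      have hisupp : i ∈ σ.support := by
        rw [hsupp, Finset.mem_filter]
        exact ⟨Finset.mem_univ _, by omega⟩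
      have hcmem : σ.cycleOf i ∈ σ.cycleFactorsFinset :=
        Equiv.Perm.cycleOf_mem_cycleFactorsFinset_iff.mpr hisupp
      refine ⟨σ.cycleOf i, hcmem, ?_⟩
      have hmin := Finset.min'_mem (σ.cycleOf i).support (hne _ hcmem)
      have hsame : σ.SameCycle i ((σ.cycleOf i).support.min' (hne _ hcmem)) :=
        (Equiv.Perm.mem_support_cycleOf_iff.mp hmin).1
      obtain ⟨k, -, hk⟩ := hsame.exists_pow_eq'
      rw [← hk]
      exact Kpow k i
  -- final sign computation
  have hsign : ((Equiv.Perm.sign σ : ℤˣ) : ℤ) =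
      (-1 : ℤ) ^ (∑ q ∈ Q2, q.natDegree + Q2.card) := by
    rw [Equiv.Perm.sign_of_cycleType, Equiv.Perm.sum_cycleType, hsuppcard, hccount]
    push_cast
    ring
  have calc1 : (-1 : ℤ) ^ (∑ q ∈ Q2, q.natDegree + Q2.card) =
      ∏ q ∈ Q2, (-1 : ℤ) ^ (q.natDegree + 1) := by
    rw [Finset.prod_pow_eq_pow_sum]
    congr 1
    rw [Finset.sum_add_distrib, Finset.sum_const, smul_eq_mul, mul_one]
  have calc2 : ∏ q ∈ Q2, (-1 : ℤ) ^ (q.natDegree + 1) =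
      ∏ q ∈ Q, (-1 : ℤ) ^ (q.natDegree + 1) := by
    apply Finset.prod_subset (Finset.filter_subset _ _)
    intro q hq hnq
    have h1 : 0 < q.natDegree := hdegQ q hq
    have h2 : ¬ (2 ≤ q.natDegree) := by
      intro h
      exact hnq (Finset.mem_filter.mpr ⟨hq, h⟩)
    have h3 : q.natDegree = 1 := by omega
    rw [h3]
    norm_num
  have calc3 : ∏ q ∈ Q, (-1 : ℤ) ^ (q.natDegree + 1) = (-1 : ℤ) ^ S := by
    have hSQ : S = (Q.filter fun q => Even q.natDegree).card := by
      rw [hS]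
      rfl
    rw [hSQ, ← Finset.prod_const, Finset.prod_filter]
    refine Finset.prod_congr rfl fun q hq => ?_
    by_cases hEv : Even q.natDegree
    · rw [if_pos hEv]
      exact Odd.neg_one_pow (Even.add_one hEv)
    · rw [if_neg hEv]
      exact Even.neg_one_pow (Odd.add_one (Nat.not_even_iff_odd.mp hEv))
  rw [hL1, hsign, calc1, calc2, calc3]
end

section
/- Let n be a positive integer, p a prime dividing n, and g₁, g₂ monic polynomials in ℤ[x]. If f(x) is a monic polynomial such that the ideal generated by g₁ and g₂ in (ℤ/nℤ)[x] equals the ideal generated by f, then f mod p equals gcd(g₁, g₂) computed in 𝔽_p[x] (up to monic normalization). -/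
/-! Reduction mod `p` carries the ideal `(g₁, g₂) = (f)` of `(ℤ/nℤ)[x]` to `(ḡ₁, ḡ₂) = (f̄)` in
`𝔽_p[x]`. There the ideal is also generated by `gcd ḡ₁ ḡ₂`, and two monic generators of the
same principal ideal are associated, hence equal. -/

open Polynomial

theorem Polynomial.Monic.eq_gcd_of_span_pair_eq {K : Type*} [Field K] [DecidableEq K]
    {a b c : K[X]} (hc : c.Monic) (hspan : Ideal.span {a, b} = Ideal.span {c}) :
    c = gcd a b := by
  have hassoc : Associated c (gcd a b) :=
    Ideal.span_singleton_eq_span_singleton.mp (by rw [← hspan, span_gcd])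
  rw [← hc.normalize_eq_self, ← normalize_gcd, normalize_eq_normalize_iff_associated.mpr hassoc]

theorem Ideal.map_span_pair {R S : Type*} [Semiring R] [Semiring S] (φ : R →+* S) (a b : R) :
    Ideal.map φ (Ideal.span {a, b}) = Ideal.span {φ a, φ b} := by
  rw [Ideal.map_span, Set.image_pair]

theorem stmt_7_general (n : ℕ) (p : ℕ) [Fact p.Prime] (hdvd : p ∣ n)
    (g₁ g₂ : ℤ[X])
    (f : (ZMod n)[X]) (hf : f.Monic)
    (hideal : Ideal.span {g₁.map (Int.castRingHom (ZMod n)), g₂.map (Int.castRingHom (ZMod n))}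
      = Ideal.span {f}) :
    f.map (ZMod.castHom hdvd (ZMod p)) =
      gcd (g₁.map (Int.castRingHom (ZMod p))) (g₂.map (Int.castRingHom (ZMod p))) := by
  set φ := ZMod.castHom hdvd (ZMod p)
  have hcomp : φ.comp (Int.castRingHom (ZMod n)) = Int.castRingHom (ZMod p) :=
    RingHom.ext_int _ _
  refine (hf.map φ).eq_gcd_of_span_pair_eq ?_
  have hmap := congrArg (Ideal.map (mapRingHom φ)) hideal
  rw [Ideal.map_span_pair, Ideal.map_span, Set.image_singleton] at hmap
  simpa only [coe_mapRingHom, map_map, hcomp] using hmap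

theorem stmt_7 (n : ℕ) (hn : 0 < n) (p : ℕ) [Fact p.Prime] (hdvd : p ∣ n)
    (g₁ g₂ : ℤ[X]) (hg₁ : g₁.Monic) (hg₂ : g₂.Monic)
    (f : (ZMod n)[X]) (hf : f.Monic)
    (hideal : Ideal.span {g₁.map (Int.castRingHom (ZMod n)), g₂.map (Int.castRingHom (ZMod n))}
      = Ideal.span {f}) :
    f.map (ZMod.castHom hdvd (ZMod p)) =
      gcd (g₁.map (Int.castRingHom (ZMod p))) (g₂.map (Int.castRingHom (ZMod p))) :=
  stmt_7_general n p hdvd g₁ g₂ f hf hideal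
end

section
/- Let n be a positive integer and f, g monic polynomials in ℤ[x]. If for every prime p dividing n we have gcd(f, g) = 1 in 𝔽_p[x], then the ideal generated by f and g in (ℤ/nℤ)[x] is the unit ideal, i.e., there exist a(x), b(x) ∈ ℤ[x] with f·a + g·b ≡ 1 (mod n). -/
/-!
Write `I = (f, g)` in `ℤ[X]`. The conclusion says `I + (n) = ℤ[X]`, and the hypothesis gives
`I + (p) = ℤ[X]` for each prime `p ∣ n`, since `(p)` is the kernel of reduction mod `p`.
Ideals coprime to `I` are closed under products, so `I + (n) = ℤ[X]` follows by multiplying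
over the prime factors of `n`, counted with multiplicity.
-/

open Polynomial

section Coprime

variable {R S : Type*} [CommRing R] [CommRing S]

theorem exists_map_eq_one_iff_isCoprime_span_pair_ker (φ : R →+* S) (x y : R) :
    (∃ a b : R, φ (x * a + y * b) = 1) ↔
      IsCoprime (Ideal.span {x, y}) (RingHom.ker φ) := by
  simp only [Ideal.isCoprime_iff_exists, Ideal.mem_span_pair, RingHom.mem_ker]
  constructor
  · rintro ⟨a, b, hab⟩
    refine ⟨x * a + y * b, ⟨a, b, by ring⟩, 1 - (x * a + y * b), by simp [hab], by ring⟩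
  · rintro ⟨_, ⟨a, b, rfl⟩, k, hk, hsum⟩
    refine ⟨a, b, ?_⟩
    rw [show x * a + y * b = 1 - k by linear_combination hsum, map_sub, hk, map_one, sub_zero]

theorem IsCoprime.exists_map_eq_one {φ : R →+* S} (hφ : Function.Surjective φ) {x y : R}
    (h : IsCoprime (φ x) (φ y)) : ∃ a b : R, φ (x * a + y * b) = 1 := by
  obtain ⟨u, v, huv⟩ := h
  obtain ⟨a, rfl⟩ := hφ u
  obtain ⟨b, rfl⟩ := hφ v
  exact ⟨a, b, by rw [map_add, map_mul, map_mul, ← huv]; ring⟩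

theorem Ideal.isCoprime_span_natCast_of_forall_prime_dvd (I : Ideal R) {n : ℕ} (hn : n ≠ 0)
    (h : ∀ p : ℕ, p.Prime → p ∣ n → IsCoprime I (Ideal.span {(p : R)})) :
    IsCoprime I (Ideal.span {(n : R)}) := by
  induction n using induction_on_primes with
  | zero => exact absurd rfl hn
  | one => simp [Ideal.isCoprime_iff_sup_eq]
  | prime_mul p a hp ih =>
    rw [Nat.cast_mul, ← Ideal.span_singleton_mul_span_singleton]
    exact (h p hp (dvd_mul_right p a)).mul_right
      (ih (right_ne_zero_of_mul hn) fun q hq hqa => h q hq (hqa.mul_left p))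

end Coprime

theorem Polynomial.ker_mapRingHom_intCastRingHom (m : ℕ) :
    RingHom.ker (mapRingHom (Int.castRingHom (ZMod m))) = Ideal.span {(m : ℤ[X])} := by
  rw [ker_mapRingHom, ZMod.ker_intCastRingHom, Ideal.map_span, Set.image_singleton, map_natCast]

theorem Polynomial.exists_map_intCastRingHom_eq_one_iff (f g : ℤ[X]) (m : ℕ) :
    (∃ a b : ℤ[X], (f * a + g * b).map (Int.castRingHom (ZMod m)) = 1) ↔
      IsCoprime (Ideal.span {f, g}) (Ideal.span {(m : ℤ[X])}) := by
  rw [← ker_mapRingHom_intCastRingHom, ← exists_map_eq_one_iff_isCoprime_span_pair_ker]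
  rfl

theorem stmt_8_general (n : ℕ) (hn : 0 < n) (f g : ℤ[X])
    (hcop : ∀ (p : ℕ) (_ : Fact p.Prime), p ∣ n →
      IsCoprime (f.map (Int.castRingHom (ZMod p))) (g.map (Int.castRingHom (ZMod p)))) :
    ∃ a b : ℤ[X], (f * a + g * b).map (Int.castRingHom (ZMod n)) = 1 := by
  refine (exists_map_intCastRingHom_eq_one_iff f g n).2 <|
    (Ideal.span {f, g}).isCoprime_span_natCast_of_forall_prime_dvd hn.ne' fun p hp hpn =>
      (exists_map_intCastRingHom_eq_one_iff f g p).1 ?_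
  exact (hcop p ⟨hp⟩ hpn).exists_map_eq_one
    (φ := mapRingHom (Int.castRingHom (ZMod p))) (map_surjective _ ZMod.intCast_surjective)

theorem stmt_8 (n : ℕ) (hn : 0 < n) (f g : ℤ[X]) (hf : f.Monic) (hg : g.Monic)
    (hcop : ∀ (p : ℕ) (_ : Fact p.Prime), p ∣ n →
      IsCoprime (f.map (Int.castRingHom (ZMod p))) (g.map (Int.castRingHom (ZMod p)))) :
    ∃ a b : ℤ[X], (f * a + g * b).map (Int.castRingHom (ZMod n)) = 1 :=
  stmt_8_general n hn f g hcop
end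

section
/- Let a, b be integers and f(x) = (x - a)(x - b). If n is an odd composite with gcd(n, 2·f(0)·disc(f)) = 1 and f(x) divides x^n - x in (ℤ/nℤ)[x], then a^{n-1} ≡ 1 (mod n) and b^{n-1} ≡ 1 (mod n). -/
/-! A root `c` of `f` in `ℤ/nℤ` is a root of `X ^ n - X`, so `c ^ n = c`; since `c` divides
`2 f(0) disc(f)`, which is prime to `n`, `c` is a unit and may be cancelled. -/

open Polynomial

theorem pow_pred_eq_one_of_pow_eq_self {M : Type*} [Monoid M] {c : M} (hc : IsUnit c) {n : ℕ}
    (h : c ^ n = c) : c ^ (n - 1) = 1 := by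
  cases n with
  | zero => exact pow_zero c
  | succ m => exact hc.mul_right_cancel (by rwa [one_mul, ← pow_succ])

theorem pow_eq_self_of_X_sub_C_dvd {R : Type*} [CommRing R] {c : R} {n : ℕ}
    (h : X - C c ∣ X ^ n - X) : c ^ n = c := by
  simpa [sub_eq_zero] using dvd_iff_isRoot.mp h

theorem ZMod.intCast_pow_pred_eq_one {n : ℕ} {c : ℤ} (hc : IsCoprime c n)
    (h : X - C (c : ZMod n) ∣ X ^ n - X) : (c : ZMod n) ^ (n - 1) = 1 :=
  pow_pred_eq_one_of_pow_eq_self (ZMod.unitOfIsCoprime c hc).isUnit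
    (pow_eq_self_of_X_sub_C_dvd h)

theorem stmt_11_general (a b : ℤ) (f : ℤ[X]) (hf : f = (X - C a) * (X - C b))
    (n : ℕ)
    (hcop : Int.gcd (n : ℤ) (2 * (a * b) * (a - b) ^ 2) = 1)
    (hdvd : f.map (Int.castRingHom (ZMod n)) ∣ (X ^ n - X)) :
    (a : ZMod n) ^ (n - 1) = 1 ∧ (b : ZMod n) ^ (n - 1) = 1 := by
  have hcop' : IsCoprime (2 * (a * b) * (a - b) ^ 2) (n : ℤ) :=
    (Int.isCoprime_iff_gcd_eq_one.mpr hcop).symm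
  have ha : IsCoprime a n := hcop'.of_isCoprime_of_dvd_left ⟨2 * b * (a - b) ^ 2, by ring⟩
  have hb : IsCoprime b n := hcop'.of_isCoprime_of_dvd_left ⟨2 * a * (a - b) ^ 2, by ring⟩
  have hmap : f.map (Int.castRingHom (ZMod n)) = (X - C (a : ZMod n)) * (X - C (b : ZMod n)) := by
    simp [hf]
  rw [hmap] at hdvd
  exact ⟨ZMod.intCast_pow_pred_eq_one ha (dvd_of_mul_right_dvd hdvd),
    ZMod.intCast_pow_pred_eq_one hb (dvd_of_mul_left_dvd hdvd)⟩

theorem stmt_11 (a b : ℤ) (f : ℤ[X]) (hf : f = (X - C a) * (X - C b))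
    (n : ℕ) (hodd : Odd n) (hn : 1 < n) (hcomp : ¬ n.Prime)
    (hcop : Int.gcd (n : ℤ) (2 * (a * b) * (a - b) ^ 2) = 1)
    (hdvd : f.map (Int.castRingHom (ZMod n)) ∣ (X ^ n - X)) :
    (a : ZMod n) ^ (n - 1) = 1 ∧ (b : ZMod n) ^ (n - 1) = 1 :=
  stmt_11_general a b f hf n hcop hdvd
end

section
/- Let m, n be positive integers and f, g, r ∈ ℤ[x]. If f(r(x)) ≡ 0 (mod (n, f(x))) and x^m ≡ g(x) (mod (n, f(x))), then r(x)^m ≡ g(r(x)) (mod (n, f(x))). -/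
/-! Substituting `r` for `X` is a ring endomorphism of `ℤ[X]` fixing `n` and sending `f` to `f.comp r ∈ I`,
so it maps the ideal `(n, f)` into `I`; apply it to `X ^ m - g`. -/

open Polynomial

theorem Polynomial.comp_mem_span_pair {R : Type*} [CommRing R] {c : R} {f p : R[X]} (r : R[X])
    (hp : p ∈ Ideal.span {C c, f}) : p.comp r ∈ Ideal.span {C c, f.comp r} := by
  have h := Ideal.mem_map_of_mem (compRingHom r) hp
  rwa [Ideal.map_span, Set.image_pair, coe_compRingHom_apply, coe_compRingHom_apply, C_comp] at h

theorem stmt_12_general (m n : ℕ) (f g r : ℤ[X])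
    (I : Ideal ℤ[X]) (hI : I = Ideal.span {(n : ℤ[X]), f})
    (hroot : f.comp r ∈ I) (hpow : X ^ m - g ∈ I) :
    r ^ m - g.comp r ∈ I := by
  have hnI : (n : ℤ[X]) ∈ I := hI ▸ Ideal.subset_span (Set.mem_insert _ _)
  have hspan : Ideal.span {C (n : ℤ), f.comp r} ≤ I := by
    rw [Ideal.span_le, Set.insert_subset_iff, Set.singleton_subset_iff, C_eq_natCast]
    exact ⟨hnI, hroot⟩
  rw [hI, ← C_eq_natCast] at hpow
  simpa only [sub_comp, X_pow_comp] using hspan (comp_mem_span_pair r hpow)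

theorem stmt_12 (m n : ℕ) (hm : 0 < m) (hn : 0 < n) (f g r : ℤ[X])
    (I : Ideal ℤ[X]) (hI : I = Ideal.span {(n : ℤ[X]), f})
    (hroot : f.comp r ∈ I) (hpow : X ^ m - g ∈ I) :
    r ^ m - g.comp r ∈ I :=
  stmt_12_general m n f g r I hI hroot hpow
end

section
/- Let p be an odd prime, f ∈ 𝔽_p[x] monic squarefree with f(0) ≠ 0, and for i ≥ 1 let F_i(x) be the product of monic irreducible factors of f of degree exactly i. Write p^i - 1 = 2^r·s with s odd. Define F_{i,0}(x) = gcd(F_i(x), x^s - 1) and F_{i,j}(x) = gcd(F_i(x), x^{2^{j-1}s} + 1) for 1 ≤ j ≤ r. Then F_i(x) = ∏_{j=0}^{r} F_{i,j}(x), and i divides the degree of each F_{i,j}. -/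
open Polynomial UniqueFactorizationMonoid


lemma aux_dvd (p : ℕ) [Fact p.Prime] (i : ℕ) (hi : 1 ≤ i) (q : (ZMod p)[X])
    (hq : Prime q) (hdeg : q.natDegree = i) (h0 : q.eval 0 ≠ 0) :
    q ∣ X ^ (p ^ i - 1) - 1 := by
  have hirr : Irreducible q := hq.irreducible
  haveI := Fact.mk hirr
  have hq0 : q ≠ 0 := hq.ne_zero
  let pb := AdjoinRoot.powerBasis hq0
  haveI : Module.Finite (ZMod p) (AdjoinRoot q) := Module.Finite.of_basis pb.basis
  haveI : Finite (AdjoinRoot q) := Module.finite_iff_finite.mp ‹_›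
  haveI : Fintype (AdjoinRoot q) := Fintype.ofFinite _
  have hcard : Fintype.card (AdjoinRoot q) = p ^ i := by
    rw [Module.card_eq_pow_finrank (K := ZMod p), ZMod.card]
    congr 1
    rw [pb.finrank, AdjoinRoot.powerBasis_dim hq0, hdeg]
  have hroot : (AdjoinRoot.root q) ≠ 0 := by
    intro h
    apply h0
    have h1 : (aeval (AdjoinRoot.root q)) q = 0 := by
      rw [AdjoinRoot.aeval_eq, AdjoinRoot.mk_self]
    rw [h] at h1
    have h2 : (algebraMap (ZMod p) (AdjoinRoot q)) (q.eval 0) = 0 := by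
      rw [← Polynomial.coeff_zero_eq_eval_zero, Polynomial.coeff_zero_eq_aeval_zero' q]
      exact h1
    exact (algebraMap (ZMod p) (AdjoinRoot q)).injective (by rw [h2, map_zero])
  have hpow : (AdjoinRoot.root q) ^ (p ^ i - 1) = 1 := by
    have := FiniteField.pow_card_sub_one_eq_one (AdjoinRoot.root q) hroot
    rwa [hcard] at this
  have : (AdjoinRoot.mk q) (X ^ (p ^ i - 1) - 1) = 0 := by
    rw [map_sub, map_pow, map_one, AdjoinRoot.mk_X, hpow, sub_self]
  exact (AdjoinRoot.mk_eq_zero).mp this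


lemma aux_prod {R : Type*} [CommRing R] (r s : ℕ) :
    (X : R[X]) ^ (2 ^ r * s) - 1 = (X ^ s - 1) * ∏ j ∈ Finset.range r, (X ^ (2 ^ j * s) + 1) := by
  induction r with
  | zero => simp
  | succ r ih =>
    rw [Finset.prod_range_succ, ← mul_assoc, ← ih]
    have h2 : 2 ^ (r + 1) * s = 2 ^ r * s * 2 := by ring
    rw [h2, pow_mul]
    ring

lemma aux_gcd_mul {K : Type*} [Field K] [DecidableEq K] (k m n : K[X]) (h : IsCoprime m n) :
    gcd k (m * n) = gcd k m * gcd k n := by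
  refine dvd_antisymm_of_normalize_eq (normalize_gcd _ _) ?_ (gcd_mul_dvd_mul_gcd _ _ _) ?_
  · rw [normalize_mul, normalize_gcd, normalize_gcd]
  · have h1 : IsCoprime (gcd k m) (gcd k n) :=
      (h.of_isCoprime_of_dvd_left (gcd_dvd_right k m)).of_isCoprime_of_dvd_right
        (gcd_dvd_right k n)
    exact dvd_gcd (h1.mul_dvd (gcd_dvd_left k m) (gcd_dvd_left k n))
      (mul_dvd_mul (gcd_dvd_right k m) (gcd_dvd_right k n))

lemma aux_gcd_prod {K : Type*} [Field K] [DecidableEq K] (k : K[X]) (t : Finset ℕ)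
    (b : ℕ → K[X]) (hco : ∀ j ∈ t, ∀ l ∈ t, j ≠ l → IsCoprime (b j) (b l)) :
    gcd k (∏ j ∈ t, b j) = ∏ j ∈ t, gcd k (b j) := by
  classical
  induction t using Finset.induction_on with
  | empty => simp
  | insert _ _ hnm ih =>
    rename_i a t2
    rw [Finset.prod_insert hnm, Finset.prod_insert hnm,
      aux_gcd_mul k _ _ (IsCoprime.prod_right fun j hj =>
        hco a (Finset.mem_insert_self a t2) j (Finset.mem_insert_of_mem hj)
          (fun he => hnm (he ▸ hj))),
      ih (fun j hj l hl hjl =>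
        hco j (Finset.mem_insert_of_mem hj) l (Finset.mem_insert_of_mem hl) hjl)]

theorem stmt_14 (p : ℕ) [Fact p.Prime] (hodd : p ≠ 2)
    (f : (ZMod p)[X]) (hmonic : f.Monic) (hsqf : Squarefree f) (h0 : f.eval 0 ≠ 0)
    (i : ℕ) (hi : 1 ≤ i)
    (Fi : (ZMod p)[X])
    (hFi : Fi = ((normalizedFactors f).filter fun q => q.natDegree = i).prod)
    (r s : ℕ) (hs : Odd s) (hrs : p ^ i - 1 = 2 ^ r * s)
    (Fij : ℕ → (ZMod p)[X])
    (hFij0 : Fij 0 = gcd Fi (X ^ s - 1))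
    (hFij : ∀ j, 1 ≤ j → j ≤ r → Fij j = gcd Fi (X ^ (2 ^ (j - 1) * s) + 1)) :
    Fi = ∏ j ∈ Finset.range (r + 1), Fij j ∧ ∀ j ≤ r, i ∣ (Fij j).natDegree := by
  classical
  have hp := (Fact.out : p.Prime)
  have hf0 : f ≠ 0 := hmonic.ne_zero
  set M := (normalizedFactors f).filter (fun q => q.natDegree = i) with hM
  -- facts about elements of M
  have hMsub : M ≤ normalizedFactors f := Multiset.filter_le _ _
  have hMprime : ∀ q ∈ M, Prime q := fun q hq =>
    prime_of_normalized_factor q (Multiset.mem_of_le hMsub hq)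
  have hMdeg : ∀ q ∈ M, q.natDegree = i := fun q hq => (Multiset.mem_filter.mp hq).2
  have hMeval : ∀ q ∈ M, q.eval 0 ≠ 0 := by
    intro q hq he
    obtain ⟨c, hc⟩ := dvd_of_mem_normalizedFactors (Multiset.mem_of_le hMsub hq)
    apply h0
    rw [hc, eval_mul, he, zero_mul]
  have hMmonic : ∀ q ∈ M, q.Monic := by
    intro q hq
    have h1 := normalize_normalized_factor q (Multiset.mem_of_le hMsub hq)
    have h2 : q ≠ 0 := (hMprime q hq).ne_zero
    have := monic_normalize (p := q) h2
    rwa [h1] at this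
  have hFimonic : Fi.Monic := by
    rw [hFi]
    have := monic_multiset_prod_of_monic M id (fun q hq => hMmonic q hq)
    rwa [Multiset.map_id] at this
  have hFi0 : Fi ≠ 0 := hFimonic.ne_zero
  -- N and g
  set N := p ^ i - 1 with hN
  have hpi2 : 2 ≤ p ^ i := le_trans hp.two_le (Nat.le_self_pow (by omega) p)
  have hNcast : (N : ZMod p) ≠ 0 := by
    have h1 : (N : ZMod p) = (p ^ i : ℕ) - 1 := by
      rw [hN, Nat.cast_sub (by omega)]; simp
    rw [h1]
    have : ((p ^ i : ℕ) : ZMod p) = 0 := by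
      rw [Nat.cast_pow, ZMod.natCast_self, zero_pow (by omega)]
    rw [this, zero_sub]
    exact neg_ne_zero.mpr one_ne_zero
  set g : (ZMod p)[X] := X ^ N - 1 with hg
  have hgsep : Squarefree g := by
    have := Polynomial.separable_X_pow_sub_C (F := ZMod p) (n := N) 1 hNcast one_ne_zero
    rw [map_one] at this
    exact this.squarefree
  -- Fi divides g
  have hFidvd : Fi ∣ g := by
    rw [hFi]
    refine Multiset.prod_primes_dvd g hMprime
      (fun q hq => aux_dvd p i hi q (hMprime q hq) (hMdeg q hq) (hMeval q hq)) ?_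
    intro a
    have hnodup : M.Nodup := Multiset.Nodup.filter _
      ((squarefree_iff_nodup_normalizedFactors hf0).mp hsqf)
    rw [Multiset.countP_eq_card_filter]
    set t := M.filter (Associated a) with ht
    have htn : t.Nodup := hnodup.filter _
    have hall : ∀ x ∈ t, x = normalize a := by
      intro x hx
      have hx2 := Multiset.mem_filter.mp hx
      have hn := normalize_normalized_factor x (Multiset.mem_of_le hMsub hx2.1)
      rw [← hn]
      exact normalize_eq_normalize_iff.mpr ⟨hx2.2.symm.dvd, hx2.2.dvd⟩
    have hrep : t = Multiset.replicate (Multiset.card t) (normalize a) :=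
      Multiset.eq_replicate_card.mpr hall
    have hc := Multiset.nodup_iff_count_le_one.mp htn (normalize a)
    rw [hrep, Multiset.count_replicate_self] at hc
    exact hc
  -- the factors
  set b : ℕ → (ZMod p)[X] := fun j => if j = 0 then X ^ s - 1 else X ^ (2 ^ (j - 1) * s) + 1
    with hb
  have hs1 : 1 ≤ s := hs.pos
  have hbne : ∀ j, b j ≠ 0 := by
    intro j hj
    rcases eq_or_ne j 0 with rfl | hj0
    · simp only [hb, if_pos rfl] at hj
      apply_fun eval 0 at hj
      simp [zero_pow (by omega : s ≠ 0)] at hj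
    · simp only [hb, if_neg hj0] at hj
      apply_fun eval 1 at hj
      simp at hj
      have : ((2 : ZMod p)) ≠ 0 := by
        have : ((2 : ℕ) : ZMod p) ≠ 0 := by
          rw [Ne, ZMod.natCast_eq_zero_iff]
          exact fun h => hodd ((Nat.prime_dvd_prime_iff_eq hp Nat.prime_two).mp h)
        simpa using this
      rw [one_add_one_eq_two] at hj
      exact this hj
  have hgprod : g = ∏ j ∈ Finset.range (r + 1), b j := by
    rw [hg, hrs, aux_prod r s, Finset.prod_range_succ']
    have h1 : b 0 = X ^ s - 1 := by simp [hb]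
    have h2 : ∀ j, b (j + 1) = X ^ (2 ^ j * s) + 1 := by intro j; simp [hb]
    rw [h1, mul_comm]
    first
    | rfl
    | (congr 1
       exact Finset.prod_congr rfl fun j _ => (h2 j).symm)
  -- pairwise coprimality
  have hco : ∀ j ∈ Finset.range (r + 1), ∀ l ∈ Finset.range (r + 1), j ≠ l →
      IsCoprime (b j) (b l) := by
    intro j hj l hl hjl
    have hdvd2 : b j * b l ∣ g := by
      rw [hgprod, ← Finset.prod_pair hjl]
      exact Finset.prod_dvd_prod_of_subset _ _ _ (by
        intro x hx
        rcases Finset.mem_insert.mp hx with rfl | hx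
        · exact hj
        · rw [Finset.mem_singleton.mp hx]; exact hl)
    have hsq2 : Squarefree (b j * b l) := hgsep.squarefree_of_dvd hdvd2
    rw [← gcd_isUnit_iff]
    exact hsq2 _ (mul_dvd_mul (gcd_dvd_left _ _) (gcd_dvd_right _ _))
  -- gcd distribution
  have hgcdg : gcd Fi g = Fi :=
    ((gcd_eq_left_iff Fi g hFimonic.normalize_eq_self).mpr hFidvd)
  have hFijb : ∀ j ≤ r, Fij j = gcd Fi (b j) := by
    intro j hjr
    rcases eq_or_ne j 0 with rfl | hj0
    · rw [hFij0]; simp [hb]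
    · rw [hFij j (by omega) hjr]; simp [hb, hj0]
  have hmain : Fi = ∏ j ∈ Finset.range (r + 1), Fij j := by
    conv_lhs => rw [← hgcdg, hgprod]
    rw [aux_gcd_prod Fi _ b hco]
    refine Finset.prod_congr rfl fun j hj => ?_
    rw [hFijb j (by simpa using Nat.lt_succ_iff.mp (Finset.mem_range.mp hj))]
  refine ⟨hmain, ?_⟩
  -- degrees
  intro j hjr
  rw [hFijb j hjr]
  set d := gcd Fi (b j) with hd
  have hd0 : d ≠ 0 := by
    rw [hd, Ne, gcd_eq_zero_iff]
    exact fun h => hbne j h.2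
  have hdmonic : d.Monic := by
    have := monic_normalize (p := d) hd0
    rwa [hd, normalize_gcd] at this
  have hdfac : ∀ q ∈ normalizedFactors d, q.natDegree = i := by
    intro q hq
    have hqprime : Prime q := prime_of_normalized_factor q hq
    have hqd : q ∣ d := dvd_of_mem_normalizedFactors hq
    have hqFi : q ∣ Fi := hqd.trans (gcd_dvd_left _ _)
    rw [hFi] at hqFi
    obtain ⟨x, hxM, hqx⟩ := hqprime.exists_mem_multiset_dvd hqFi
    have hassoc : Associated q x := hqprime.associated_of_dvd (hMprime x hxM) hqx
    have hqmonic : q.Monic := by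
      have h1 := normalize_normalized_factor q hq
      have := monic_normalize (p := q) hqprime.ne_zero
      rwa [h1] at this
    rw [Polynomial.eq_of_monic_of_associated hqmonic (hMmonic x hxM) hassoc]
    exact hMdeg x hxM
  have hdprod : d = (normalizedFactors d).prod := by
    refine (Polynomial.eq_of_monic_of_associated hdmonic ?_
      (prod_normalizedFactors hd0).symm)
    have h1 : ∀ q ∈ normalizedFactors d, q.Monic := by
      intro q hq
      have := monic_normalize (p := q) (prime_of_normalized_factor q hq).ne_zero
      rwa [normalize_normalized_factor q hq] at this
    have := monic_multiset_prod_of_monic (normalizedFactors d) id h1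
    rwa [Multiset.map_id] at this
  have hdeg : d.natDegree = (Multiset.card (normalizedFactors d)) * i := by
    conv_lhs => rw [hdprod]
    rw [natDegree_multiset_prod_of_monic]
    · rw [Multiset.map_congr rfl hdfac]
      simp [Multiset.map_const', Multiset.sum_replicate, mul_comm]
    · intro q hq
      have := monic_normalize (p := q) (prime_of_normalized_factor q hq).ne_zero
      rwa [normalize_normalized_factor q hq] at this
  rw [hdeg]
  exact dvd_mul_left i _
end

section
/- Let P, Q, n be integers with n odd and gcd(n, 2QΔ) = 1 where Δ = P² - 4Q. In the ring R = ℤ[x]/(n, x² - Px + Q), let X = -Q'Px + Q'P² - 1 where Q'Q ≡ 1 (mod n). Then X ≡ (P - x)·x^{-1} in R, and X satisfies X² + (2 - P²Q')X + 1 ≡ 0 in R; moreover (PQ')²(x² - Px + Q) = X² + (2 - P²Q')X + 1 as an identity after the change of variables. Consequently, U_k(P,Q) ≡ 0 (mod n) if and only if X^k ≡ 1 in R, and V_k(P,Q) ≡ 0 (mod n) if and only if X^k ≡ -1 in R. -/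
open Polynomial

/-- A monic polynomial of degree 2 divides a constant only if the constant is zero. -/
lemma aux_const_dvd {S : Type*} [CommRing S] (pp : S[X]) (hm : pp.Monic)
    (hdeg : pp.degree = 2) (c : S) (h : pp ∣ C c) : c = 0 := by
  rcases subsingleton_or_nontrivial S with hs | hn
  · exact Subsingleton.elim _ _
  by_contra hc
  obtain ⟨f, hf⟩ := h
  rcases eq_or_ne f 0 with rfl | hf0
  · rw [mul_zero] at hf
    exact hc (by simpa using hf)
  have hd : (C c).degree = f.degree + pp.degree := by
    rw [hf, mul_comm]; exact hm.degree_mul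
  rw [degree_C hc, hdeg] at hd
  have h0 : 0 ≤ f.degree := zero_le_degree_iff.mpr hf0
  have h2 : (2 : WithBot ℕ) ≤ 0 := by
    calc (2 : WithBot ℕ) = 0 + 2 := by simp
    _ ≤ f.degree + 2 := add_le_add_left h0 2
    _ = 0 := hd.symm
  exact absurd h2 (by decide)

set_option maxHeartbeats 1600000 in
theorem stmt_18 (P Q Q' : ℤ) (n : ℕ) (hodd : Odd n)
    (hcop : Int.gcd (n : ℤ) (2 * Q * (P ^ 2 - 4 * Q)) = 1)
    (hQ' : ((Q' : ZMod n)) * (Q : ZMod n) = 1) :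
    let I : Ideal (Polynomial (ZMod n)) :=
      Ideal.span {X ^ 2 - C (P : ZMod n) * X + C (Q : ZMod n)}
    let mk := Ideal.Quotient.mk I
    let x := mk X
    let Xv := mk (-C ((Q' * P : ℤ) : ZMod n) * X + C ((Q' * P ^ 2 - 1 : ℤ) : ZMod n))
    -- `X ≡ (P - x)·x⁻¹`, i.e. `X·x = P - x`
    (Xv * x = mk (C (P : ZMod n)) - x) ∧
    -- `X` is a root of `Y² + (2 - P²Q')Y + 1`
    (Xv ^ 2 + mk (C ((2 - P ^ 2 * Q' : ℤ) : ZMod n)) * Xv + 1 = 0) ∧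
    -- the polynomial identity `(PQ')²(x² - Px + Q) = X(x)² + (2 - P²Q')X(x) + 1`
    (C (((P * Q') ^ 2 : ℤ) : ZMod n) * (X ^ 2 - C (P : ZMod n) * X + C (Q : ZMod n)) =
      (-C ((Q' * P : ℤ) : ZMod n) * X + C ((Q' * P ^ 2 - 1 : ℤ) : ZMod n)) ^ 2 +
        C ((2 - P ^ 2 * Q' : ℤ) : ZMod n) *
          (-C ((Q' * P : ℤ) : ZMod n) * X + C ((Q' * P ^ 2 - 1 : ℤ) : ZMod n)) + 1) ∧
    -- the Lucas sequence criteria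
    (∀ k : ℕ, ((n : ℤ) ∣ lucasU P Q k ↔ Xv ^ k = 1) ∧
      ((n : ℤ) ∣ lucasV P Q k ↔ Xv ^ k = -1)) := by
  intro I mk x Xv
  have hgen : x ^ 2 - mk (C (P : ZMod n)) * x + mk (C (Q : ZMod n)) = 0 := by
    have h : mk (X ^ 2 - C (P : ZMod n) * X + C (Q : ZMod n)) = 0 := by
      rw [Ideal.Quotient.eq_zero_iff_mem]
      exact Ideal.subset_span rfl
    simpa [map_sub, map_add, map_mul, map_pow] using h
  -- ℤ-casts into the quotient ring
  have hcastR : ∀ m : ℤ, ((m : (ZMod n)[X] ⧸ I)) = mk (C ((m : ZMod n))) := by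
    intro m
    rw [show (C ((m : ZMod n))) = ((m : ℤ) : (ZMod n)[X]) from (map_intCast C m), map_intCast]
  have hpR : mk (C (P : ZMod n)) = ((P : ℤ) : (ZMod n)[X] ⧸ I) := (hcastR P).symm
  have hqR : mk (C (Q : ZMod n)) = ((Q : ℤ) : (ZMod n)[X] ⧸ I) := (hcastR Q).symm
  have hq'R : mk (C (Q' : ZMod n)) = ((Q' : ℤ) : (ZMod n)[X] ⧸ I) := (hcastR Q').symm
  generalize hpRd : ((P : ℤ) : (ZMod n)[X] ⧸ I) = pR at hpR
  generalize hqRd : ((Q : ℤ) : (ZMod n)[X] ⧸ I) = qR at hqR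
  generalize hq'Rd : ((Q' : ℤ) : (ZMod n)[X] ⧸ I) = q'R at hq'R
  have hgenR : x ^ 2 - pR * x + qR = 0 := by rw [← hpR, ← hqR]; exact hgen
  have hqq' : q'R * qR = 1 := by
    rw [← hq'R, ← hqR, ← map_mul, ← C_mul, hQ', C_1, map_one]
  have hXv : Xv = -(q'R * pR) * x + (q'R * pR ^ 2 - 1) := by
    have h1 : Xv = mk (-C ((Q' * P : ℤ) : ZMod n) * X + C ((Q' * P ^ 2 - 1 : ℤ) : ZMod n)) := rfl
    rw [h1]
    rw [← hq'R, ← hpR]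
    push_cast
    simp only [map_add, map_mul, map_neg, map_sub, map_pow, map_one, C_mul, C_sub, C_1, C_pow]
    rfl
  -- Part 1
  have part1 : Xv * x = mk (C (P : ZMod n)) - x := by
    rw [hXv, hpR]
    linear_combination (-(q'R * pR)) * hgenR + pR * hqq'
  refine ⟨part1, ?_, ?_, ?_⟩
  -- Part 2
  · rw [hXv]
    have h2 : mk (C ((2 - P ^ 2 * Q' : ℤ) : ZMod n)) = 2 - pR ^ 2 * q'R := by
      rw [← hcastR (2 - P ^ 2 * Q')]
      push_cast
      rw [hpRd, hq'Rd]
    rw [h2]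
    linear_combination (q'R * pR) ^ 2 * hgenR - q'R * pR ^ 2 * hqq'
  -- Part 3 (polynomial identity)
  · have hqC : (C (Q' : ZMod n)) * (C (Q : ZMod n)) = 1 := by rw [← C_mul, hQ', C_1]
    push_cast
    simp only [C_mul, C_sub, C_add, C_pow, C_1, map_ofNat]
    linear_combination (C ((Q' : ZMod n)) * C ((P : ZMod n)) ^ 2) * hqC
  -- Part 4
  · have hxy : x * (pR - x) = qR := by linear_combination -hgenR
    have hxu : IsUnit x :=
      IsUnit.of_mul_eq_one (a := x) (q'R * (pR - x)) (by linear_combination q'R * hxy + hqq')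
    -- 2x - pR is a unit
    have hcop' : IsCoprime ((n : ℤ)) (P ^ 2 - 4 * Q) := by
      have h := Int.isCoprime_iff_gcd_eq_one.mpr hcop
      exact h.of_isCoprime_of_dvd_right (dvd_mul_left _ _)
    have hdunit : IsUnit ((P ^ 2 - 4 * Q : ℤ) : (ZMod n)[X] ⧸ I) := by
      obtain ⟨a, b, hab⟩ := hcop'
      apply IsUnit.of_mul_eq_one ((b : ℤ) : (ZMod n)[X] ⧸ I)
      have h := congrArg (fun t : ℤ => (t : (ZMod n)[X] ⧸ I)) hab
      push_cast at h
      have hn0 : ((n : ℕ) : (ZMod n)[X] ⧸ I) = 0 := by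
        have h2 := hcastR (n : ℤ)
        push_cast at h2
        rw [h2]
        simp
      rw [hn0] at h
      push_cast
      linear_combination h
    have hdu : IsUnit (2 * x - pR) := by
      apply isUnit_of_mul_isUnit_left (y := 2 * x - pR)
      have h : (2 * x - pR) * (2 * x - pR) = ((P ^ 2 - 4 * Q : ℤ) : (ZMod n)[X] ⧸ I) := by
        push_cast
        rw [hpRd, hqRd]
        linear_combination 4 * hgenR
      rw [h]; exact hdunit
    -- the key identities for Lucas sequences
    have key : ∀ k : ℕ,
        ((2 * x - pR) * ((lucasU P Q k : ℤ) : (ZMod n)[X] ⧸ I) = x ^ k - (pR - x) ^ k) ∧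
        (((lucasV P Q k : ℤ) : (ZMod n)[X] ⧸ I) = x ^ k + (pR - x) ^ k) := by
      intro k
      induction k using Nat.twoStepInduction with
      | zero => constructor <;> simp [lucasU, lucasV] <;> ring
      | one =>
        constructor
        · simp only [lucasU, Int.cast_one, mul_one, pow_one]
          ring
        · simp only [lucasV, pow_one]
          rw [hpRd]
          ring
      | more k ih1 ih2 =>
        constructor
        · simp only [lucasU]
          push_cast
          rw [hpRd, hqRd]
          linear_combination pR * ih2.1 - qR * ih1.1 + (x ^ k - (pR - x) ^ k) * hxy
        · simp only [lucasV]
          push_cast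
          rw [hpRd, hqRd]
          linear_combination pR * ih2.2 - qR * ih1.2 + (x ^ k + (pR - x) ^ k) * hxy
    -- cast-to-zero criterion
    have cast0 : ∀ m : ℤ, ((m : (ZMod n)[X] ⧸ I) = 0 ↔ (n : ℤ) ∣ m) := by
      intro m
      rw [← ZMod.intCast_zmod_eq_zero_iff_dvd]
      constructor
      · intro h
        rcases subsingleton_or_nontrivial (ZMod n) with hs | hn
        · exact Subsingleton.elim _ _
        rw [hcastR m, Ideal.Quotient.eq_zero_iff_mem] at h
        rw [show I = Ideal.span {X ^ 2 - C (P : ZMod n) * X + C (Q : ZMod n)} from rfl,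
          Ideal.mem_span_singleton] at h
        have hrw : X ^ 2 - C (P : ZMod n) * X + C (Q : ZMod n)
            = X ^ 2 + (C (-(P : ZMod n)) * X + C (Q : ZMod n)) := by
          rw [C_neg]; ring
        have hlin : (C (-(P : ZMod n)) * X + C (Q : ZMod n)).degree < 2 :=
          lt_of_le_of_lt degree_linear_le (by decide)
        have hmon : (X ^ 2 - C (P : ZMod n) * X + C (Q : ZMod n)).Monic := by
          rw [hrw]; exact monic_X_pow_add (by exact_mod_cast hlin)
        have hdeg : (X ^ 2 - C (P : ZMod n) * X + C (Q : ZMod n)).degree = 2 := by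
          rw [hrw]
          rw [degree_add_eq_left_of_degree_lt (by rwa [degree_X_pow])]
          exact degree_X_pow 2
        exact aux_const_dvd _ hmon hdeg _ h
      · intro h
        rw [hcastR m, h, map_zero, map_zero]
    -- relation between Xv and x
    have hXx : Xv * x = pR - x := by rw [part1, hpR]
    have hXk : ∀ k : ℕ, Xv ^ k * x ^ k = (pR - x) ^ k := by
      intro k; rw [← mul_pow, hXx]
    intro k
    have hxku : IsUnit (x ^ k) := hxu.pow k
    constructor
    · rw [← cast0]
      constructor
      · intro h
        have h2 : x ^ k - (pR - x) ^ k = 0 := by rw [← (key k).1, h, mul_zero]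
        have h3 : Xv ^ k * x ^ k = 1 * x ^ k := by
          rw [hXk k, one_mul]; linear_combination -h2
        exact hxku.mul_right_cancel h3
      · intro h
        have h2 : x ^ k - (pR - x) ^ k = 0 := by
          rw [← hXk k, h, one_mul, sub_self]
        have h4 := (key k).1
        rw [h2] at h4
        exact (hdu.mul_right_eq_zero).mp h4
    · rw [← cast0]
      constructor
      · intro h
        have h2 : x ^ k + (pR - x) ^ k = 0 := by rw [← (key k).2, h]
        have h3 : Xv ^ k * x ^ k = (-1) * x ^ k := by
          rw [hXk k]; linear_combination h2
        exact hxku.mul_right_cancel h3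
      · intro h
        have h2 : x ^ k + (pR - x) ^ k = 0 := by
          rw [← hXk k, h]; ring
        rw [(key k).2, h2]
end

section
/- Let n be a Carmichael number (odd composite with a^{n-1} ≡ 1 mod n for all a coprime to n, hence squarefree) and f ∈ ℤ[x] a monic polynomial that splits into linear factors modulo every prime dividing n, with gcd(n, f(0)·disc(f)) = 1. Then f splits into linear factors modulo n, and f(x) divides x^n - x in (ℤ/nℤ)[x]. -/
open Polynomial

private lemma multiset_prod_eq_fin_prod {K : Type*} [CommRing K] {d : ℕ} (s : Multiset K)
    (h : s.toList.length = d) :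
    (s.map fun a => X - C a).prod = ∏ i : Fin d, (X - C (s.toList.get (Fin.cast h.symm i))) := by
  subst h
  conv_lhs => rw [← s.coe_toList]
  rw [Multiset.map_coe, Multiset.prod_coe, ← Fin.prod_univ_fun_getElem s.toList fun a => X - C a]
  simp [List.get_eq_getElem]

theorem stmt_19 (n : ℕ) (hodd : Odd n) (hn : 1 < n) (hcomp : ¬ n.Prime)
    (hsqf : Squarefree n)
    -- `n` is a Carmichael number
    (hcarmichael : ∀ a : ZMod n, IsUnit a → a ^ (n - 1) = 1)
    (f : ℤ[X]) (hf : f.Monic)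
    -- `f` splits into linear factors modulo every prime dividing `n`
    (hsplits : ∀ (p : ℕ) (_ : Fact p.Prime), p ∣ n →
      Splits (f.map (Int.castRingHom (ZMod p))))
    -- `gcd(n, f(0)·disc f) = 1`: modulo each prime `p ∣ n`, `f` is separable and `f(0) ≠ 0`
    (hcop : ∀ (p : ℕ) (_ : Fact p.Prime), p ∣ n →
      (f.map (Int.castRingHom (ZMod p))).Separable ∧
        (f.map (Int.castRingHom (ZMod p))).eval 0 ≠ 0) :
    (∃ a : Fin f.natDegree → ZMod n,
      f.map (Int.castRingHom (ZMod n)) = ∏ i, (X - C (a i))) ∧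
    f.map (Int.castRingHom (ZMod n)) ∣ (X ^ n - X) := by
  classical
  haveI : NeZero n := ⟨by omega⟩
  haveI : Nontrivial (ZMod n) := ZMod.nontrivial_iff.mpr (by omega)
  have instP : ∀ p : n.primeFactors, Fact (Nat.Prime (p : ℕ)) :=
    fun p => ⟨Nat.prime_of_mem_primeFactors p.2⟩
  have hdvdn : ∀ p : n.primeFactors, (p : ℕ) ∣ n := fun p => Nat.dvd_of_mem_primeFactors p.2
  -- CRT setup
  have hpair : Pairwise (Function.onFun Nat.Coprime fun p : n.primeFactors => (p : ℕ)) := by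
    intro p q hpq
    exact (Nat.coprime_primes (instP p).1 (instP q).1).mpr fun h => hpq (Subtype.ext h)
  have hprod : (∏ p : n.primeFactors, (p : ℕ)) = n := by
    exact (Finset.prod_coe_sort n.primeFactors (fun p => p)).trans
      (Nat.prod_primeFactors_of_squarefree hsqf)
  let E : ZMod n ≃+* Π p : n.primeFactors, ZMod (p : ℕ) :=
    (ZMod.ringEquivCongr hprod.symm).trans (ZMod.prodEquivPi _ hpair)
  let ψ : ZMod n →+* Π p : n.primeFactors, ZMod (p : ℕ) :=
    Pi.ringHom fun p => ZMod.castHom (hdvdn p) (ZMod (p : ℕ))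
  have hψE : ψ = (E : ZMod n →+* Π p : n.primeFactors, ZMod (p : ℕ)) := Subsingleton.elim _ _
  have hψinj : Function.Injective ψ := by rw [hψE]; exact E.injective
  have hES : ∀ (v : Π q : n.primeFactors, ZMod (q : ℕ)) (p : n.primeFactors),
      ZMod.castHom (hdvdn p) (ZMod (p : ℕ)) (E.symm v) = v p := by
    intro v p
    have : ψ (E.symm v) = v := by rw [hψE]; exact E.apply_symm_apply v
    exact congrFun this p
  -- equality of polynomials over `ZMod n` can be checked modulo each prime
  have key : ∀ P Q : (ZMod n)[X],
      (∀ p : n.primeFactors, P.map (ZMod.castHom (hdvdn p) (ZMod (p : ℕ))) =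
        Q.map (ZMod.castHom (hdvdn p) (ZMod (p : ℕ)))) → P = Q := by
    intro P Q h
    ext k
    apply hψinj
    funext p
    show (ZMod.castHom (hdvdn p) (ZMod (p : ℕ))) (P.coeff k) =
      (ZMod.castHom (hdvdn p) (ZMod (p : ℕ))) (Q.coeff k)
    rw [← Polynomial.coeff_map, ← Polynomial.coeff_map, h p]
  have hcomp' : ∀ p : n.primeFactors,
      (ZMod.castHom (hdvdn p) (ZMod (p : ℕ))).comp (Int.castRingHom (ZMod n)) =
        Int.castRingHom (ZMod (p : ℕ)) := fun p => Subsingleton.elim _ _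
  -- roots modulo each prime
  have hlen : ∀ p : n.primeFactors,
      (f.map (Int.castRingHom (ZMod (p : ℕ)))).roots.toList.length = f.natDegree := by
    intro p
    haveI := instP p
    rw [Multiset.length_toList, splits_iff_card_roots.mp (hsplits p (instP p) (hdvdn p)),
      hf.natDegree_map]
  let r : ∀ p : n.primeFactors, Fin f.natDegree → ZMod (p : ℕ) := fun p i =>
    (f.map (Int.castRingHom (ZMod (p : ℕ)))).roots.toList.get (Fin.cast (hlen p).symm i)
  have hprodp : ∀ p : n.primeFactors,
      f.map (Int.castRingHom (ZMod (p : ℕ))) = ∏ i : Fin f.natDegree, (X - C (r p i)) := by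
    intro p
    haveI := instP p
    have h1 := (hsplits p (instP p) (hdvdn p)).eq_prod_roots_of_monic
      (hf.map (Int.castRingHom (ZMod (p : ℕ))))
    rw [h1, multiset_prod_eq_fin_prod _ (hlen p)]
  -- divisibility modulo each prime
  have hdvdp : ∀ p : n.primeFactors,
      f.map (Int.castRingHom (ZMod (p : ℕ))) ∣ (X ^ n - X : (ZMod (p : ℕ))[X]) := by
    intro p
    haveI := instP p
    have hgm : (f.map (Int.castRingHom (ZMod (p : ℕ)))).Monic := hf.map _
    have hXn : (X ^ n - X : (ZMod (p : ℕ))[X]).Monic := by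
      apply monic_X_pow_sub
      calc (X : (ZMod (p : ℕ))[X]).degree ≤ 1 := degree_X_le
      _ < n := by exact_mod_cast Nat.one_lt_cast.mpr hn
    have hsub : (f.map (Int.castRingHom (ZMod (p : ℕ)))).roots ≤
        (X ^ n - X : (ZMod (p : ℕ))[X]).roots := by
      rw [Multiset.le_iff_subset (nodup_roots (hcop p (instP p) (hdvdn p)).1)]
      intro a ha
      have hroot : (f.map (Int.castRingHom (ZMod (p : ℕ)))).IsRoot a :=
        ((mem_roots hgm.ne_zero).mp ha)
      have ha0 : a ≠ 0 := by
        rintro rfl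
        exact (hcop p (instP p) (hdvdn p)).2 hroot
      have hu : IsUnit a := isUnit_iff_ne_zero.mpr ha0
      obtain ⟨u, hu1, hu2⟩ : ∃ u : ZMod n, IsUnit u ∧
          ZMod.castHom (hdvdn p) (ZMod (p : ℕ)) u = a := by
        refine ⟨E.symm (Function.update (1 : Π q : n.primeFactors, ZMod (q : ℕ)) p a), ?_, ?_⟩
        · apply IsUnit.map (E.symm : (Π q : n.primeFactors, ZMod (q : ℕ)) →+* ZMod n)
          refine IsUnit.of_mul_eq_one
            (Function.update (1 : Π q : n.primeFactors, ZMod (q : ℕ)) p a⁻¹) ?_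
          funext q
          by_cases hq : q = p
          · subst hq
            simp [mul_inv_cancel₀ ha0]
          · simp [Function.update_of_ne hq]
        · rw [hES, Function.update_self]
      have hpow : a ^ (n - 1) = 1 := by
        have h1 := hcarmichael u hu1
        calc a ^ (n - 1) = ZMod.castHom (hdvdn p) (ZMod (p : ℕ)) (u ^ (n - 1)) := by
              rw [map_pow, hu2]
        _ = 1 := by rw [h1, map_one]
      have han : a ^ n = a := by
        have h2 : a ^ ((n - 1) + 1) = a := by rw [pow_succ, hpow, one_mul]
        rwa [Nat.sub_add_cancel (by omega)] at h2
      rw [mem_roots hXn.ne_zero]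
      simp [IsRoot, han]
    calc f.map (Int.castRingHom (ZMod (p : ℕ)))
        = ((f.map (Int.castRingHom (ZMod (p : ℕ)))).roots.map fun a => X - C a).prod :=
          (hsplits p (instP p) (hdvdn p)).eq_prod_roots_of_monic hgm
      _ ∣ ((X ^ n - X : (ZMod (p : ℕ))[X]).roots.map fun a => X - C a).prod :=
          Multiset.prod_dvd_prod_of_le (Multiset.map_le_map hsub)
      _ ∣ X ^ n - X := prod_multiset_X_sub_C_dvd _
  constructor
  · refine ⟨fun i => E.symm fun p => r p i, ?_⟩
    apply key
    intro p
    haveI := instP p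
    rw [Polynomial.map_map, hcomp' p, Polynomial.map_prod, hprodp p]
    simp only [Polynomial.map_sub, map_X, map_C]
    congr 1
    funext i
    rw [hES]
  · have hFm : (f.map (Int.castRingHom (ZMod n))).Monic := hf.map _
    rw [← modByMonic_eq_zero_iff_dvd hFm]
    apply key
    intro p
    haveI := instP p
    rw [Polynomial.map_zero, Polynomial.map_modByMonic _ hFm, Polynomial.map_map, hcomp' p,
      Polynomial.map_sub, Polynomial.map_pow, map_X,
      modByMonic_eq_zero_iff_dvd (hf.map _)]
    exact hdvdp p
end
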